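/- arXiv:2510.05422 — 7 statements merged into one kernel-verified Lean document; each statement's English description precedes it below -/
import Mathlib

section
/- Fix integers s ≥ 1, r ≥ 2 and 1 ≤ p ≤ q, and let K_{p,q} be the complete bipartite graph with parts of sizes p and q. If p ≤ r ≤ min{s, p+q−1}, then there exist a constant K and n₀ such that for all n ≥ n₀, | ex_r(n, BM_{s+1} ∪ BK_{p,q}) − (p−1)·n | ≤ K. -/
open Finset

/-- `H` is an `r`-uniform hypergraph (an `r`-graph): every hyperedge has exactly `r` vertices. -/
def IsUniform {V : Type*} (r : ℕ) (H : Finset (Finset V)) : Prop :=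
  ∀ e ∈ H, e.card = r

/-- `H` contains a Berge copy of the graph with edge set `F`: there are an injection `g`
of the vertices of `F` into the vertices of `H` and an injection `φ` of the edges of `F`
into the hyperedges of `H` such that `g '' e ⊆ φ e` for every edge `e` of `F`. -/
def ContainsBerge {α V : Type*} [DecidableEq α] [DecidableEq V]
    (F : Finset (Finset α)) (H : Finset (Finset V)) : Prop :=
  ∃ (g : α → V) (φ : Finset α → Finset V),
    Function.Injective g ∧ Set.InjOn φ ↑F ∧
      (∀ e ∈ F, φ e ∈ H) ∧ ∀ e ∈ F, e.image g ⊆ φ e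

/-- `H` contains a copy (a subhypergraph isomorphic to) of the hypergraph with
vertex set `A` and edge set `F`. -/
def ContainsCopy {α V : Type*} [DecidableEq α] [DecidableEq V]
    (A : Finset α) (F : Finset (Finset α)) (H : Finset (Finset V)) : Prop :=
  ∃ g : α → V, Set.InjOn g ↑A ∧ ∀ e ∈ F, e.image g ∈ H

/-- The edge set of the matching `M_t` consisting of `t` pairwise disjoint edges. -/
def matchingHG (t : ℕ) : Finset (Finset (Fin t × Fin 2)) :=
  Finset.univ.image fun i : Fin t => ({(i, 0), (i, 1)} : Finset (Fin t × Fin 2))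

/-- The Turán number: the maximum number of hyperedges in an `r`-graph on `n` vertices
satisfying the freeness predicate `Free`. -/
noncomputable def exr (n r : ℕ) (Free : Finset (Finset (Fin n)) → Prop) : ℕ :=
  sSup {m | ∃ H : Finset (Finset (Fin n)), IsUniform r H ∧ Free H ∧ H.card = m}

/-- The edge set of the complete bipartite graph `K_{p,q}`. -/
def completeBipartite (p q : ℕ) : Finset (Finset (Fin p ⊕ Fin q)) :=
  (Finset.univ ×ˢ Finset.univ).image
    fun x : Fin p × Fin q => ({Sum.inl x.1, Sum.inr x.2} : Finset (Fin p ⊕ Fin q))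

/-!
Lower bound: fix an `r`-set `B` and `p - 1` of its points `b`; the hyperedges `(B \ {b}) ∪ {v}`
with `v ∉ B` number `(p - 1)(n - r)`. Each meets the complement of `B` in one vertex, so a Berge
`M_{s+1}` would need `s + 1 ≤ r` vertices in `B`; vertices outside `B` have degree `p - 1`, so a
Berge `K_{p,q}`, all of whose vertices have degree at least `p`, would need `p + q ≤ r` vertices
in `B`.

Upper bound: a maximal Berge matching has at most `s` hyperedges, and the set `W` of its `2s`
chosen vertices contains all but at most one vertex of every other hyperedge. At most `2^{2s}`
hyperedges lie inside `W`; a hyperedge with one vertex `v` outside `W` is `v` together with a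
"link set" in `W`. If more than `(q - 1) 2^{2^{2s}}` vertices had `p` link sets, `q` of them would
share `p` link sets, and distinct representatives of these (Hall) complete a Berge `K_{p,q}`. So
all but boundedly many vertices `v` contribute at most `p - 1` hyperedges.
-/

section Berge

variable {ι α V : Type*} [DecidableEq α] [DecidableEq V]

theorem containsBerge_image_univ [Fintype ι] {E : ι → Finset α} (hE : Function.Injective E)
    {H : Finset (Finset V)} (g : α → V) (hg : Function.Injective g) (ψ : ι → Finset V)
    (hψ : Function.Injective ψ) (hψH : ∀ i, ψ i ∈ H) (hsub : ∀ i, (E i).image g ⊆ ψ i) :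
    ContainsBerge (univ.image E) H := by
  refine ⟨g, Function.extend E ψ fun _ => ∅, hg, ?_, ?_, ?_⟩
  · rintro _ he _ he' h
    obtain ⟨i, -, rfl⟩ := mem_image.mp he
    obtain ⟨j, -, rfl⟩ := mem_image.mp he'
    rw [hE.extend_apply, hE.extend_apply] at h
    rw [hψ h]
  all_goals
    rintro _ he
    obtain ⟨i, -, rfl⟩ := mem_image.mp he
    rw [hE.extend_apply]
  exacts [hψH i, hsub i]

theorem ContainsBerge.exists_injective_card_filter_mem_le {F : Finset (Finset α)}
    {H : Finset (Finset V)} (h : ContainsBerge F H) :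
    ∃ g : α → V, Function.Injective g ∧ ∀ a, #{e ∈ F | a ∈ e} ≤ #{e ∈ H | g a ∈ e} := by
  obtain ⟨g, φ, hg, hφ, hφH, hsub⟩ := h
  refine ⟨g, hg, fun a => card_le_card_of_injOn φ (fun e he => ?_) (hφ.mono fun e he => ?_)⟩
  · obtain ⟨heF, hae⟩ := mem_filter.mp he
    exact mem_filter.mpr ⟨hφH e heF, hsub e heF (mem_image_of_mem g hae)⟩
  · exact (mem_filter.mp he).1

end Berge

section BergeMatching

variable {V : Type*}

/-- A Berge matching, recorded as pairs `(e, P)` of a hyperedge `e` and the matching edge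
`P ⊆ e` it carries. -/
structure IsBergeMatching (H : Finset (Finset V)) (M : Finset (Finset V × Finset V)) : Prop where
  fst_mem : ∀ x ∈ M, x.1 ∈ H
  snd_subset : ∀ x ∈ M, x.2 ⊆ x.1
  card_snd : ∀ x ∈ M, #x.2 = 2
  injOn_fst : Set.InjOn Prod.fst (M : Set (Finset V × Finset V))
  pairwiseDisjoint_snd : (M : Set (Finset V × Finset V)).PairwiseDisjoint Prod.snd

variable {H : Finset (Finset V)} {M : Finset (Finset V × Finset V)}

theorem isBergeMatching_empty : IsBergeMatching H ∅ :=
  ⟨by simp, by simp, by simp, by simp, by simp⟩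

theorem IsBergeMatching.mono {M' : Finset (Finset V × Finset V)} (hM : IsBergeMatching H M)
    (h : M' ⊆ M) : IsBergeMatching H M' where
  fst_mem x hx := hM.fst_mem x (h hx)
  snd_subset x hx := hM.snd_subset x (h hx)
  card_snd x hx := hM.card_snd x (h hx)
  injOn_fst := hM.injOn_fst.mono (coe_subset.mpr h)
  pairwiseDisjoint_snd := hM.pairwiseDisjoint_snd.subset (coe_subset.mpr h)

variable [DecidableEq V]

theorem IsBergeMatching.insert (hM : IsBergeMatching H M) {e P : Finset V} (he : e ∈ H)
    (hP : P ⊆ e) (hP2 : #P = 2) (heM : e ∉ M.image Prod.fst)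
    (hPM : Disjoint P (M.biUnion Prod.snd)) : IsBergeMatching H (insert (e, P) M) := by
  have hnotMem : (e, P) ∉ M := fun h => heM (mem_image_of_mem _ h)
  refine ⟨?_, ?_, ?_, ?_, ?_⟩
  · simpa [he] using hM.fst_mem
  · simpa [hP] using hM.snd_subset
  · simpa [hP2] using hM.card_snd
  · rw [coe_insert, Set.injOn_insert (by simpa using hnotMem)]
    exact ⟨hM.injOn_fst, by simpa using heM⟩
  · rw [coe_insert]
    refine hM.pairwiseDisjoint_snd.insert fun x hx _ => ?_
    exact hPM.mono_right (subset_biUnion_of_mem Prod.snd hx)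

theorem IsBergeMatching.containsBerge (hM : IsBergeMatching H M) :
    ContainsBerge (matchingHG #M) H := by
  set f : Fin #M ≃ M := M.equivFin.symm
  have hf : ∀ i, (f i : Finset V × Finset V) ∈ M := fun i => (f i).2
  let pair (i : Fin #M) : Fin 2 ≃ (f i).1.2 :=
    (equivFinOfCardEq (hM.card_snd _ (hf i))).symm
  refine containsBerge_image_univ (fun i j h => ?_) (fun x => pair x.1 x.2)
    (fun x y h => ?_) (fun i => (f i).1.1) (fun i j h => ?_) (fun i => hM.fst_mem _ (hf i))
    (fun i => ?_)
  · simpa using congrArg (fun e => (i, (0 : Fin 2)) ∈ e) h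
  · obtain ⟨i, k⟩ := x
    obtain ⟨j, l⟩ := y
    obtain rfl : i = j := by
      by_contra hij
      refine disjoint_left.mp (hM.pairwiseDisjoint_snd (hf i) (hf j) ?_) (pair i k).2 ?_
      · exact fun h => hij (f.injective (Subtype.ext h))
      · exact (congrArg (· ∈ (f j).1.2) h).mpr (pair j l).2
    obtain rfl := (pair i).injective (Subtype.ext h)
    rfl
  · exact f.injective (Subtype.ext (hM.injOn_fst (hf i) (hf j) h))
  · intro v hv
    obtain ⟨x, hx, rfl⟩ := mem_image.mp hv
    obtain rfl : x.1 = i := by aesop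
    exact hM.snd_subset _ (hf x.1) (pair x.1 x.2).2

end BergeMatching

section Cover

variable {V : Type*} [DecidableEq V] {H : Finset (Finset V)}

theorem IsBergeMatching.card_le_of_not_containsBerge {M : Finset (Finset V × Finset V)} {s : ℕ}
    (hM : IsBergeMatching H M) (hH : ¬ ContainsBerge (matchingHG (s + 1)) H) : #M ≤ s := by
  by_contra! hs
  obtain ⟨M', hM', hcard⟩ := exists_subset_card_eq hs
  exact hH (hcard ▸ (hM.mono hM').containsBerge :)

theorem exists_cover_of_not_containsBerge_matchingHG [Fintype V] {s : ℕ}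
    (hH : ¬ ContainsBerge (matchingHG (s + 1)) H) :
    ∃ (W : Finset V) (E₀ : Finset (Finset V)),
      #W ≤ 2 * s ∧ #E₀ ≤ s ∧ ∀ e ∈ H, e ∉ E₀ → #(e \ W) ≤ 1 := by
  classical
  obtain ⟨M, hM, hmax⟩ := ({M | IsBergeMatching H M} : Finset _).exists_max_image card
    ⟨∅, mem_filter.mpr ⟨mem_univ _, isBergeMatching_empty⟩⟩
  simp only [mem_filter, mem_univ, true_and] at hM hmax
  have hMs := hM.card_le_of_not_containsBerge hH
  refine ⟨M.biUnion Prod.snd, M.image Prod.fst, ?_, card_image_le.trans hMs, ?_⟩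
  · calc #(M.biUnion Prod.snd) ≤ ∑ x ∈ M, #x.2 := card_biUnion_le
      _ = 2 * #M := by rw [sum_congr rfl hM.card_snd, sum_const, smul_eq_mul, mul_comm]
      _ ≤ 2 * s := by omega
  · intro e he heM
    by_contra! h2
    obtain ⟨P, hP, hP2⟩ := exists_subset_card_eq h2
    have hext := hmax _ (hM.insert he (hP.trans sdiff_subset) hP2 heM
      (disjoint_of_subset_left hP sdiff_disjoint))
    rw [card_insert_of_notMem fun h => heM (mem_image_of_mem _ h)] at hext
    omega

end Cover

section CompleteBipartite

variable {V : Type*} [DecidableEq V] {H : Finset (Finset V)}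

/-- Hall's condition holds because two distinct `k`-sets already cover `k + 1` points. -/
theorem exists_injective_forall_mem_of_card_eq {ι : Type*} [Fintype ι] {A : ι → Finset V}
    {k : ℕ} (hA : Function.Injective A) (hcard : ∀ i, #(A i) = k) (hk : 1 ≤ k)
    (hι : Fintype.card ι ≤ k + 1) : ∃ u : ι → V, Function.Injective u ∧ ∀ i, u i ∈ A i := by
  refine (all_card_le_biUnion_card_iff_exists_injective A).mp fun S => ?_
  rcases S.eq_empty_or_nonempty with rfl | ⟨i, hi⟩
  · simp
  by_cases hS : #S ≤ 1
  · calc #S ≤ #(A i) := by rw [hcard i]; omega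
      _ ≤ #(S.biUnion A) := card_le_card (subset_biUnion_of_mem A hi)
  obtain ⟨j, hj, hji⟩ := exists_mem_ne (s := S) (by omega) i
  have hnsub : ¬ A j ⊆ A i := fun h =>
    hji (hA (eq_of_subset_of_card_le h (by rw [hcard, hcard])))
  obtain ⟨x, hxj, hxi⟩ := not_subset.mp hnsub
  calc #S ≤ k + 1 := (card_le_univ S).trans hι
    _ = #(insert x (A i)) := by rw [card_insert_of_notMem hxi, hcard]
    _ ≤ #(S.biUnion A) := card_le_card
        (insert_subset (mem_biUnion.mpr ⟨j, hj, hxj⟩) (subset_biUnion_of_mem A hi))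

theorem completeBipartite_eq (p q : ℕ) :
    completeBipartite p q = univ.image fun x : Fin p × Fin q =>
      ({Sum.inl x.1, Sum.inr x.2} : Finset (Fin p ⊕ Fin q)) := by
  rw [completeBipartite, univ_product_univ]

theorem containsBerge_completeBipartite_of_forall_insert_mem {p q k : ℕ}
    {𝒜 : Finset (Finset V)} {T : Finset V} (h𝒜 : #𝒜 = p) (hT : #T = q) (hk : 1 ≤ k)
    (hpk : p ≤ k + 1) (hcard : ∀ A ∈ 𝒜, #A = k) (hnotMem : ∀ v ∈ T, ∀ A ∈ 𝒜, v ∉ A)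
    (hmem : ∀ v ∈ T, ∀ A ∈ 𝒜, insert v A ∈ H) :
    ContainsBerge (completeBipartite p q) H := by
  set A : Fin p ≃ 𝒜 := (equivFinOfCardEq h𝒜).symm
  set v : Fin q ≃ T := (equivFinOfCardEq hT).symm
  have hvA : ∀ j i, (v j : V) ∉ (A i : Finset V) := fun j i => hnotMem _ (v j).2 _ (A i).2
  obtain ⟨u, hu, huA⟩ := exists_injective_forall_mem_of_card_eq
    (fun i j h => A.injective (Subtype.ext h)) (fun i => hcard _ (A i).2) hk (by simpa using hpk)
  rw [completeBipartite_eq]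
  refine containsBerge_image_univ ?_ (Sum.elim u fun j => v j) ?_
    (fun x => insert (v x.2 : V) (A x.1)) ?_ (fun x => hmem _ (v x.2).2 _ (A x.1).2) ?_
  · rintro ⟨i, j⟩ ⟨i', j'⟩ h
    dsimp only at h
    have hi : Sum.inl i ∈ ({Sum.inl i', Sum.inr j'} : Finset (Fin p ⊕ Fin q)) := h ▸ by simp
    have hj : Sum.inr j ∈ ({Sum.inl i', Sum.inr j'} : Finset (Fin p ⊕ Fin q)) := h ▸ by simp
    simp_all
  · refine hu.sumElim (fun j j' h => v.injective (Subtype.ext h)) fun i j h => hvA j i ?_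
    exact h ▸ huA i
  · rintro ⟨i, j⟩ ⟨i', j'⟩ h
    dsimp only at h
    have hj : (v j : V) = v j' := by
      have := h ▸ mem_insert_self (v j : V) (A i)
      exact (mem_insert.mp this).resolve_right (hvA j i')
    obtain rfl := v.injective (Subtype.ext hj)
    have hi := congrArg (fun s => erase s (v j : V)) h
    simp only [erase_insert (hvA j _)] at hi
    rw [A.injective (Subtype.ext hi)]
  · rintro ⟨i, j⟩
    simp only [image_insert, image_singleton, Sum.elim_inl, Sum.elim_inr]
    exact insert_subset (mem_insert_of_mem (huA i)) (singleton_subset_iff.mpr (mem_insert_self _ _))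

end CompleteBipartite

section Counting

variable {V : Type*} [DecidableEq V] {H : Finset (Finset V)} {W : Finset V}

def restrictedLink (H : Finset (Finset V)) (W : Finset V) (v : V) : Finset (Finset V) :=
  {A ∈ W.powerset | v ∉ A ∧ insert v A ∈ H}

theorem card_restrictedLink_le (v : V) : #(restrictedLink H W v) ≤ 2 ^ #W :=
  (card_filter_le _ _).trans_eq (card_powerset W)

theorem erase_mem_restrictedLink {e : Finset V} {v : V} (he : e ∈ H) (hv : e \ W = {v}) :
    e.erase v ∈ restrictedLink H W v := by
  have hve : v ∈ e := (mem_sdiff.mp (hv ▸ mem_singleton_self v)).1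
  refine mem_filter.mpr ⟨mem_powerset.mpr fun x hx => ?_, notMem_erase v e,
    (insert_erase hve).symm ▸ he⟩
  by_contra hxW
  obtain ⟨hxv, hxe⟩ := mem_erase.mp hx
  exact hxv (mem_singleton.mp (hv ▸ mem_sdiff.mpr ⟨hxe, hxW⟩))

theorem card_le_of_forall_card_sdiff_le_one [Fintype V] {E₀ : Finset (Finset V)}
    (h : ∀ e ∈ H, e ∉ E₀ → #(e \ W) ≤ 1) :
    #H ≤ #E₀ + 2 ^ #W + ∑ v, #(restrictedLink H W v) := by
  let extend (v : V) : Finset V → Finset V := insert v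
  have hcover :
      H ⊆ E₀ ∪ W.powerset ∪ univ.biUnion fun v => (restrictedLink H W v).image (extend v) := by
    intro e he
    by_cases heE : e ∈ E₀
    · simp [heE]
    rcases Nat.le_one_iff_eq_zero_or_eq_one.mp (h e he heE) with h0 | h1
    · refine mem_union_left _ (mem_union_right _ (mem_powerset.mpr ?_))
      exact sdiff_eq_empty_iff_subset.mp (card_eq_zero.mp h0)
    obtain ⟨v, hv⟩ := card_eq_one.mp h1
    have hve : v ∈ e := (mem_sdiff.mp (hv ▸ mem_singleton_self v)).1
    exact mem_union_right _ (mem_biUnion.mpr ⟨v, mem_univ v,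
      mem_image.mpr ⟨e.erase v, erase_mem_restrictedLink he hv, insert_erase hve⟩⟩)
  calc #H ≤ #E₀ + #W.powerset + ∑ v, #((restrictedLink H W v).image (extend v)) :=
        (card_le_card hcover).trans
          ((card_union_le _ _).trans (add_le_add (card_union_le _ _) card_biUnion_le))
    _ ≤ #E₀ + 2 ^ #W + ∑ v, #(restrictedLink H W v) := by
        rw [card_powerset]
        exact Nat.add_le_add_left (sum_le_sum fun v _ => card_image_le) _

theorem sum_le_pred_mul_card_add_card_filter_mul {ι : Type*} (s : Finset ι) (f : ι → ℕ) (p B : ℕ)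
    (hf : ∀ i ∈ s, f i ≤ B) : ∑ i ∈ s, f i ≤ (p - 1) * #s + #{i ∈ s | p ≤ f i} * B := by
  rw [← sum_filter_not_add_sum_filter s (p ≤ f ·)]
  gcongr
  · calc ∑ i ∈ s with ¬p ≤ f i, f i ≤ #{i ∈ s | ¬p ≤ f i} * (p - 1) :=
          (sum_le_card_nsmul _ _ _ fun i hi => by have := (mem_filter.mp hi).2; omega)
      _ ≤ (p - 1) * #s := by rw [mul_comm]; exact Nat.mul_le_mul_left _ (card_filter_le _ _)
  · exact sum_le_card_nsmul _ _ _ fun i hi => hf i (mem_filter.mp hi).1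

theorem card_filter_le_card_restrictedLink_le_of_not_containsBerge [Fintype V] {p q r : ℕ}
    (hU : IsUniform r H) (hr : 2 ≤ r) (hpr : p ≤ r)
    (hK : ¬ ContainsBerge (completeBipartite p q) H) :
    #{v | p ≤ #(restrictedLink H W v)} ≤ (q - 1) * 2 ^ 2 ^ #W := by
  set S : Finset V := {v | p ≤ #(restrictedLink H W v)}
  have hchoice : ∀ v ∈ S, ∃ 𝒜 ∈ W.powerset.powersetCard p, 𝒜 ⊆ restrictedLink H W v := by
    intro v hv
    obtain ⟨𝒜, h𝒜, hcard⟩ := exists_subset_card_eq (mem_filter.mp hv).2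
    exact ⟨𝒜, mem_powersetCard.mpr ⟨h𝒜.trans (filter_subset _ _), hcard⟩, h𝒜⟩
  choose! 𝒜 h𝒜 h𝒜sub using hchoice
  by_contra! hbig
  have hlt : #(W.powerset.powersetCard p) * (q - 1) < #S :=
    calc #(W.powerset.powersetCard p) * (q - 1) ≤ 2 ^ 2 ^ #W * (q - 1) := by
          rw [card_powersetCard, card_powerset]
          exact Nat.mul_le_mul_right _ (Nat.choose_le_two_pow _ _)
      _ < #S := by rwa [mul_comm]
  obtain ⟨𝒜₀, h𝒜₀, hq⟩ := exists_lt_card_fiber_of_mul_lt_card_of_maps_to h𝒜 hlt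
  set T₀ : Finset V := {v ∈ S | 𝒜 v = 𝒜₀}
  have hlink : ∀ v ∈ T₀, ∀ A ∈ 𝒜₀, v ∉ A ∧ insert v A ∈ H := by
    intro v hv A hA
    obtain ⟨hvS, rfl⟩ := mem_filter.mp hv
    exact (mem_filter.mp (h𝒜sub v hvS hA)).2
  obtain ⟨v₀, hv₀⟩ := card_pos.mp (Nat.zero_lt_of_lt hq)
  obtain ⟨T, hT, hTcard⟩ := exists_subset_card_eq (s := T₀) (n := q) (by omega)
  refine hK (containsBerge_completeBipartite_of_forall_insert_mem (k := r - 1)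
    (mem_powersetCard.mp h𝒜₀).2 hTcard (by omega) (by omega) (fun A hA => ?_)
    (fun v hv A hA => (hlink v (hT hv) A hA).1) (fun v hv A hA => (hlink v (hT hv) A hA).2))
  have := hU _ (hlink v₀ hv₀ A hA).2
  rw [card_insert_of_notMem (hlink v₀ hv₀ A hA).1] at this
  omega

end Counting

theorem card_le_of_not_containsBerge {V : Type*} [DecidableEq V] [Fintype V]
    {H : Finset (Finset V)} {s r p q : ℕ} (hU : IsUniform r H) (hr : 2 ≤ r) (hpr : p ≤ r)
    (hM : ¬ ContainsBerge (matchingHG (s + 1)) H)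
    (hK : ¬ ContainsBerge (completeBipartite p q) H) :
    #H ≤ (p - 1) * Fintype.card V +
      (s + 2 ^ (2 * s) + (q - 1) * 2 ^ 2 ^ (2 * s) * 2 ^ (2 * s)) := by
  obtain ⟨W, E₀, hW, hE₀, hcover⟩ := exists_cover_of_not_containsBerge_matchingHG hM
  have hsum := sum_le_pred_mul_card_add_card_filter_mul univ (fun v => #(restrictedLink H W v)) p
    (2 ^ #W) fun v _ => card_restrictedLink_le v
  have hrich := card_filter_le_card_restrictedLink_le_of_not_containsBerge (W := W) hU hr hpr hK
  have hW' : 2 ^ #W ≤ 2 ^ (2 * s) := Nat.pow_le_pow_right two_pos hW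
  have hW'' : 2 ^ 2 ^ #W ≤ 2 ^ 2 ^ (2 * s) := Nat.pow_le_pow_right two_pos hW'
  calc #H ≤ #E₀ + 2 ^ #W + ∑ v, #(restrictedLink H W v) :=
        card_le_of_forall_card_sdiff_le_one hcover
    _ ≤ s + 2 ^ (2 * s) +
          ((p - 1) * Fintype.card V + (q - 1) * 2 ^ 2 ^ (2 * s) * 2 ^ (2 * s)) := by
        rw [card_univ] at hsum
        gcongr
        refine hsum.trans (Nat.add_le_add_left ?_ _)
        exact Nat.mul_le_mul (hrich.trans (Nat.mul_le_mul_left _ hW'')) hW'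
    _ = _ := by ring

section SmallCore

variable {V : Type*} [DecidableEq V]

theorem card_le_of_containsBerge_matchingHG {H : Finset (Finset V)} {B : Finset V} {t : ℕ}
    (h : ContainsBerge (matchingHG t) H) (hB : ∀ e ∈ H, #(e \ B) ≤ 1) : t ≤ #B := by
  obtain ⟨g, φ, hg, -, hφH, hsub⟩ := h
  have hpair : ∀ i : Fin t, ∃ k : Fin 2, g (i, k) ∈ B := by
    intro i
    have he : ({(i, 0), (i, 1)} : Finset (Fin t × Fin 2)) ∈ matchingHG t :=
      mem_image_of_mem _ (mem_univ i)
    by_contra! hout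
    have hne : g (i, 0) ≠ g (i, 1) := fun h => by simpa using hg h
    have h2 : {g (i, 0), g (i, 1)} ⊆ φ {(i, 0), (i, 1)} \ B := by
      intro x hx
      refine mem_sdiff.mpr ⟨hsub _ he ?_, ?_⟩
      · simpa only [image_insert, image_singleton] using hx
      · rcases mem_insert.mp hx with rfl | hx
        · exact hout 0
        · exact (mem_singleton.mp hx) ▸ hout 1
    have := (card_pair hne).symm.trans_le (card_le_card h2)
    have := hB _ (hφH _ he)
    omega
  choose k hk using hpair
  simpa using card_le_card_of_injOn (s := univ) (fun i => g (i, k i)) (fun i _ => hk i)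
    fun i _ j _ h => (Prod.ext_iff.mp (hg h)).1

theorem le_card_filter_mem_completeBipartite {p q : ℕ} (hpq : p ≤ q) (a : Fin p ⊕ Fin q) :
    p ≤ #{e ∈ completeBipartite p q | a ∈ e} := by
  rw [completeBipartite_eq]
  rcases a with i | j
  · refine hpq.trans ?_
    simpa using card_le_card_of_injOn (s := univ)
      (fun j => ({Sum.inl i, Sum.inr j} : Finset (Fin p ⊕ Fin q))) (fun j _ => by simp)
      fun j _ j' _ h => by simpa using congrArg (Sum.inr j ∈ ·) h
  · simpa using card_le_card_of_injOn (s := univ)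
      (fun i => ({Sum.inl i, Sum.inr j} : Finset (Fin p ⊕ Fin q))) (fun i _ => by simp)
      fun i _ i' _ h => by simpa using congrArg (Sum.inl i ∈ ·) h

theorem add_le_card_of_containsBerge_completeBipartite {H : Finset (Finset V)} {B : Finset V}
    {p q : ℕ} (h : ContainsBerge (completeBipartite p q) H) (hpq : p ≤ q)
    (hB : ∀ v ∉ B, #{e ∈ H | v ∈ e} < p) : p + q ≤ #B := by
  obtain ⟨g, hg, hdeg⟩ := h.exists_injective_card_filter_mem_le
  have hgB : ∀ a, g a ∈ B := fun a => by
    by_contra hout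
    exact (hB _ hout).not_ge ((le_card_filter_mem_completeBipartite hpq a).trans (hdeg a))
  simpa using card_le_card_of_injOn (s := univ) g (fun a _ => hgB a) hg.injOn

end SmallCore

section ExtremalHypergraph

variable {V : Type*} [DecidableEq V] [Fintype V]

def extremalHypergraph (B D : Finset V) : Finset (Finset V) :=
  (D ×ˢ Bᶜ).image fun x => insert x.2 (B.erase x.1)

variable {B D : Finset V}

theorem mem_extremalHypergraph {e : Finset V} :
    e ∈ extremalHypergraph B D ↔ ∃ b ∈ D, ∃ v ∉ B, insert v (B.erase b) = e := by
  simp [extremalHypergraph, and_assoc]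

theorem isUniform_extremalHypergraph (hDB : D ⊆ B) : IsUniform #B (extremalHypergraph B D) := by
  intro e he
  obtain ⟨b, hb, v, hv, rfl⟩ := mem_extremalHypergraph.mp he
  rw [card_insert_of_notMem fun h => hv (mem_of_mem_erase h), card_erase_of_mem (hDB hb)]
  have := card_pos.mpr ⟨b, hDB hb⟩
  omega

theorem card_sdiff_le_one_of_mem_extremalHypergraph {e : Finset V}
    (he : e ∈ extremalHypergraph B D) : #(e \ B) ≤ 1 := by
  obtain ⟨b, -, v, -, rfl⟩ := mem_extremalHypergraph.mp he
  refine (card_le_card fun x hx => ?_).trans (card_singleton v).le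
  obtain ⟨hx, hxB⟩ := mem_sdiff.mp hx
  rcases mem_insert.mp hx with rfl | hx
  · exact mem_singleton_self x
  · exact absurd (mem_of_mem_erase hx) hxB

theorem card_filter_mem_extremalHypergraph_le {v : V} (hv : v ∉ B) :
    #{e ∈ extremalHypergraph B D | v ∈ e} ≤ #D := by
  refine (card_le_card fun e he => ?_).trans (card_image_le (f := fun b => insert v (B.erase b)))
  obtain ⟨he, hve⟩ := mem_filter.mp he
  obtain ⟨b, hb, w, hw, rfl⟩ := mem_extremalHypergraph.mp he
  obtain rfl : v = w := (mem_insert.mp hve).resolve_right fun h => hv (mem_of_mem_erase h)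
  exact mem_image_of_mem _ hb

theorem card_extremalHypergraph (hDB : D ⊆ B) :
    #(extremalHypergraph B D) = #D * (Fintype.card V - #B) := by
  rw [extremalHypergraph, card_image_of_injOn, card_product, card_compl]
  rintro ⟨b, v⟩ hbv ⟨b', v'⟩ hbv' h
  simp only [coe_product, coe_compl, Set.mem_prod, mem_coe, Set.mem_compl_iff] at hbv hbv' h
  have hv : v = v' := by
    have := h ▸ mem_insert_self v (B.erase b)
    exact (mem_insert.mp this).resolve_right fun h => hbv.2 (mem_of_mem_erase h)
  subst hv
  have h' := congrArg (erase · v) h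
  simp only [erase_insert fun h => hbv.2 (mem_of_mem_erase h)] at h'
  rw [B.erase_injOn (hDB hbv.1) (hDB hbv'.1) h']

end ExtremalHypergraph

theorem exists_free_of_le_card {V : Type*} [DecidableEq V] [Fintype V] {s r p q : ℕ}
    (hp : 1 ≤ p) (hpq : p ≤ q) (hpr : p ≤ r) (hrs : r ≤ s) (hrq : r ≤ p + q - 1)
    (hrV : r ≤ Fintype.card V) :
    ∃ H : Finset (Finset V), IsUniform r H ∧
      (¬ ContainsBerge (matchingHG (s + 1)) H ∧ ¬ ContainsBerge (completeBipartite p q) H) ∧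
      #H = (p - 1) * (Fintype.card V - r) := by
  obtain ⟨B, -, hB⟩ := exists_subset_card_eq (s := (univ : Finset V)) (by simpa using hrV)
  obtain ⟨D, hDB, hD⟩ := exists_subset_card_eq (s := B) (n := p - 1) (by omega)
  refine ⟨extremalHypergraph B D, hB ▸ isUniform_extremalHypergraph hDB,
    ⟨fun h => ?_, fun h => ?_⟩, by rw [card_extremalHypergraph hDB, hB, hD]⟩
  · have := card_le_of_containsBerge_matchingHG h fun e he =>
      card_sdiff_le_one_of_mem_extremalHypergraph he
    omega
  · have := add_le_card_of_containsBerge_completeBipartite h hpq fun v hv =>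
      (card_filter_mem_extremalHypergraph_le hv).trans_lt (by omega)
    omega

theorem exr_le {n r K : ℕ} {Free : Finset (Finset (Fin n)) → Prop}
    (h : ∀ H, IsUniform r H → Free H → #H ≤ K) : exr n r Free ≤ K :=
  csSup_le' fun _ ⟨H, hU, hF, hH⟩ => hH ▸ h H hU hF

theorem le_exr {n r : ℕ} {Free : Finset (Finset (Fin n)) → Prop} {H : Finset (Finset (Fin n))}
    (hU : IsUniform r H) (hF : Free H) : #H ≤ exr n r Free :=
  le_csSup ⟨_, fun _ ⟨H', _, _, hH'⟩ => hH' ▸ card_le_univ H'⟩ ⟨H, hU, hF, rfl⟩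

theorem exr_berge_matching_and_berge_Kpq_i_general
    (s r p q : ℕ) (hr : 2 ≤ r) (hp : 1 ≤ p) (hpq : p ≤ q)
    (h1 : p ≤ r) (h2 : r ≤ min s (p + q - 1)) :
    ∃ K n₀ : ℕ, ∀ n : ℕ, n₀ ≤ n →
      |(exr n r (fun H => ¬ ContainsBerge (matchingHG (s + 1)) H ∧
          ¬ ContainsBerge (completeBipartite p q) H) : ℤ) -
        (((p - 1) * n : ℕ) : ℤ)| ≤ (K : ℤ) := by
  obtain ⟨C, hC⟩ : ∃ C, C = s + 2 ^ (2 * s) + (q - 1) * 2 ^ 2 ^ (2 * s) * 2 ^ (2 * s) := ⟨_, rfl⟩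
  refine ⟨(p - 1) * r + C, r, fun n hn => ?_⟩
  obtain ⟨H, hU, hF, hH⟩ := exists_free_of_le_card (V := Fin n) (s := s) hp hpq h1
    (le_min_iff.mp h2).1 (le_min_iff.mp h2).2 (by simpa using hn)
  set Free : Finset (Finset (Fin n)) → Prop := fun H =>
    ¬ ContainsBerge (matchingHG (s + 1)) H ∧ ¬ ContainsBerge (completeBipartite p q) H
  rw [Fintype.card_fin] at hH
  have hlower : (p - 1) * (n - r) ≤ exr n r Free := hH ▸ le_exr hU hF
  have hupper := exr_le (Free := Free) fun H hU hF =>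
    hC ▸ card_le_of_not_containsBerge hU hr h1 hF.1 hF.2
  rw [Fintype.card_fin] at hupper
  have hsplit : (p - 1) * n = (p - 1) * (n - r) + (p - 1) * r := by
    rw [← Nat.mul_add, Nat.sub_add_cancel hn]
  rw [abs_sub_le_iff]
  omega

/-- Theorem: for `1 ≤ p ≤ q` with `p ≤ r ≤ min{s, p+q-1}`,
`ex_r(n, BM_{s+1} ∪ BK_{p,q}) = (p-1)·n + O(1)`. -/
theorem exr_berge_matching_and_berge_Kpq_i
    (s r p q : ℕ) (hs : 1 ≤ s) (hr : 2 ≤ r) (hp : 1 ≤ p) (hpq : p ≤ q)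
    (h1 : p ≤ r) (h2 : r ≤ min s (p + q - 1)) :
    ∃ K n₀ : ℕ, ∀ n : ℕ, n₀ ≤ n →
      |(exr n r (fun H => ¬ ContainsBerge (matchingHG (s + 1)) H ∧
          ¬ ContainsBerge (completeBipartite p q) H) : ℤ) -
        (((p - 1) * n : ℕ) : ℤ)| ≤ (K : ℤ) :=
  exr_berge_matching_and_berge_Kpq_i_general s r p q hr hp hpq h1 h2
end

section
/- Fix integers s ≥ 1, r ≥ 2 and 1 ≤ p ≤ q with p = r = s+1. Then for all sufficiently large n, ex_r(n, BM_{s+1} ∪ BK_{p,q}) = ex_r(n, BM_{s+1}). -/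
/-!
Since `p = s + 1 ≤ q`, the graph `K_{p,q}` contains the matching `M_{s+1}` (join the `i`-th
vertices of the two sides), and a Berge copy of a graph restricts to a Berge copy of each of its
subgraphs. So every `BM_{s+1}`-free `r`-graph is already `BK_{p,q}`-free, for every `n`.
-/

open Finset

theorem ContainsBerge.of_embedding {α β V : Type*} [DecidableEq α] [DecidableEq β]
    [DecidableEq V] {F : Finset (Finset α)} {F' : Finset (Finset β)} {H : Finset (Finset V)}
    {f : α → β} (hf : Function.Injective f) (hF : ∀ e ∈ F, e.image f ∈ F')
    (h : ContainsBerge F' H) : ContainsBerge F H := by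
  obtain ⟨g, φ, hg, hφ, hφH, hsub⟩ := h
  refine ⟨g ∘ f, fun e => φ (e.image f), hg.comp hf, ?_, fun e he => hφH _ (hF e he), ?_⟩
  · intro e₁ he₁ e₂ he₂ heq
    exact image_injective hf (hφ (hF e₁ he₁) (hF e₂ he₂) heq)
  · intro e he
    rw [← image_image]
    exact hsub _ (hF e he)

def matchingToCompleteBipartite {t p q : ℕ} (hp : t ≤ p) (hq : t ≤ q) :
    Fin t × Fin 2 → Fin p ⊕ Fin q :=
  fun x => if x.2 = 0 then Sum.inl (Fin.castLE hp x.1) else Sum.inr (Fin.castLE hq x.1)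

theorem matchingToCompleteBipartite_injective {t p q : ℕ} (hp : t ≤ p) (hq : t ≤ q) :
    Function.Injective (matchingToCompleteBipartite hp hq) := by
  rintro ⟨i, a⟩ ⟨j, b⟩ hij
  fin_cases a <;> fin_cases b <;>
    simp_all [matchingToCompleteBipartite, Fin.ext_iff]

theorem image_matchingToCompleteBipartite_mem {t p q : ℕ} (hp : t ≤ p) (hq : t ≤ q) :
    ∀ e ∈ matchingHG t, e.image (matchingToCompleteBipartite hp hq) ∈ completeBipartite p q := by
  simp only [matchingHG, completeBipartite, mem_image, mem_univ, true_and, forall_exists_index,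
    forall_apply_eq_imp_iff, mem_product, Prod.exists]
  intro i
  exact ⟨Fin.castLE hp i, Fin.castLE hq i, by simp [matchingToCompleteBipartite]⟩

theorem ContainsBerge.matchingHG_of_completeBipartite {V : Type*} [DecidableEq V]
    {t p q : ℕ} (hp : t ≤ p) (hq : t ≤ q) {H : Finset (Finset V)}
    (h : ContainsBerge (completeBipartite p q) H) : ContainsBerge (matchingHG t) H :=
  h.of_embedding (matchingToCompleteBipartite_injective hp hq)
    (image_matchingToCompleteBipartite_mem hp hq)

theorem exr_berge_matching_and_berge_Kpq_p_eq_r_general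
    (s r p q : ℕ) (hpq : p ≤ q)
    (h1 : p = r) (h2 : r = s + 1) :
    ∃ n₀ : ℕ, ∀ n : ℕ, n₀ ≤ n →
      exr n r (fun H => ¬ ContainsBerge (matchingHG (s + 1)) H ∧
          ¬ ContainsBerge (completeBipartite p q) H) =
        exr n r (fun H => ¬ ContainsBerge (matchingHG (s + 1)) H) := by
  refine ⟨0, fun n _ => ?_⟩
  have hK : ∀ H : Finset (Finset (Fin n)), ContainsBerge (completeBipartite p q) H →
      ContainsBerge (matchingHG (s + 1)) H :=
    fun _ => ContainsBerge.matchingHG_of_completeBipartite (by omega) (by omega)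
  congr 1
  funext H
  exact propext (and_iff_left_of_imp (mt (hK H)))

/-- Proposition: for `1 ≤ p ≤ q` with `p = r = s+1`, for all sufficiently large `n`,
`ex_r(n, BM_{s+1} ∪ BK_{p,q}) = ex_r(n, BM_{s+1})`. -/
theorem exr_berge_matching_and_berge_Kpq_p_eq_r
    (s r p q : ℕ) (hs : 1 ≤ s) (hr : 2 ≤ r) (hp : 1 ≤ p) (hpq : p ≤ q)
    (h1 : p = r) (h2 : r = s + 1) :
    ∃ n₀ : ℕ, ∀ n : ℕ, n₀ ≤ n →
      exr n r (fun H => ¬ ContainsBerge (matchingHG (s + 1)) H ∧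
          ¬ ContainsBerge (completeBipartite p q) H) =
        exr n r (fun H => ¬ ContainsBerge (matchingHG (s + 1)) H) :=
  exr_berge_matching_and_berge_Kpq_p_eq_r_general s r p q hpq h1 h2
end

section
/- Fix integers s ≥ 1, r ≥ 2 and 1 ≤ p ≤ q with p+q < r = s+1. Then for all sufficiently large n, ex_r(n, BM_{s+1} ∪ BK_{p,q}) ≤ s + C(2s, r) + C(2s, r−1)·(pq−1). -/
open Finset

section Aux
variable {V : Type*} [DecidableEq V]

/-- `H` has a Berge matching of size `t`, given explicitly. -/
def MStruct (H : Finset (Finset V)) (t : ℕ) : Prop :=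
  ∃ (E : Fin t → Finset V) (a : Fin t → Fin 2 → V),
    Function.Injective E ∧ (∀ i, E i ∈ H) ∧
    (Function.Injective fun x : Fin t × Fin 2 => a x.1 x.2) ∧
    (∀ i j, a i j ∈ E i)

lemma mstruct_to_berge {H : Finset (Finset V)} {t : ℕ} (h : MStruct H t) :
    ContainsBerge (matchingHG t) H := by
  classical
  obtain ⟨E, a, hE, hEH, ha, hm⟩ := h
  have key : ∀ i : Fin t,
      (if h : ∃ j : Fin t, ({(i, (0 : Fin 2)), (i, 1)} : Finset (Fin t × Fin 2))
          = {(j, 0), (j, 1)} then E h.choose else ∅) = E i := by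
    intro i
    have h : ∃ j : Fin t, ({(i, (0 : Fin 2)), (i, 1)} : Finset (Fin t × Fin 2))
        = {(j, 0), (j, 1)} := ⟨i, rfl⟩
    rw [dif_pos h]
    congr 1
    have hc := h.choose_spec
    have hmem : (h.choose, (0 : Fin 2)) ∈
        ({(i, (0 : Fin 2)), (i, 1)} : Finset (Fin t × Fin 2)) :=
      (Finset.ext_iff.mp hc (h.choose, (0 : Fin 2))).2 (by simp)
    simp only [mem_insert, mem_singleton, Prod.ext_iff] at hmem
    rcases hmem with ⟨h1, _⟩ | ⟨_, h2⟩
    · exact h1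
    · exact absurd h2 (by decide)
  refine ⟨fun x => a x.1 x.2,
    fun e => if h : ∃ i : Fin t, e = {(i, 0), (i, 1)} then E h.choose else ∅,
    ha, ?_, ?_, ?_⟩
  · intro e he e' he' heq
    obtain ⟨i, -, rfl⟩ := Finset.mem_image.mp (Finset.mem_coe.mp he)
    obtain ⟨i', -, rfl⟩ := Finset.mem_image.mp (Finset.mem_coe.mp he')
    beta_reduce at heq
    rw [key, key] at heq
    rw [hE heq]
  · intro e he
    obtain ⟨i, -, rfl⟩ := Finset.mem_image.mp he
    dsimp only
    rw [key]
    exact hEH i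
  · intro e he
    obtain ⟨i, -, rfl⟩ := Finset.mem_image.mp he
    dsimp only
    rw [key, Finset.image_insert, Finset.image_singleton]
    exact Finset.insert_subset (hm i 0) (Finset.singleton_subset_iff.2 (hm i 1))

lemma berge_kpq {H : Finset (Finset V)} {p q : ℕ} (D : Finset V) (S : Finset (Finset V))
    (hD : p + q ≤ D.card) (hS : p * q ≤ S.card) (hSH : S ⊆ H) (hDS : ∀ e ∈ S, D ⊆ e) :
    ContainsBerge (completeBipartite p q) H := by
  classical
  obtain ⟨g0⟩ : Nonempty (Fin p ⊕ Fin q ↪ {x // x ∈ D}) := by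
    apply Function.Embedding.nonempty_of_card_le
    simpa [Fintype.card_coe] using hD
  obtain ⟨ψ0⟩ : Nonempty (Fin p × Fin q ↪ {e // e ∈ S}) := by
    apply Function.Embedding.nonempty_of_card_le
    simpa [Fintype.card_coe] using hS
  set ψ : Fin p × Fin q → Finset V := fun x => (ψ0 x : Finset V) with hψ
  have hψinj : Function.Injective ψ := fun x y hxy =>
    ψ0.injective (Subtype.ext hxy)
  have key : ∀ x : Fin p × Fin q,
      (if h : ∃ z : Fin p × Fin q,
          ({Sum.inl x.1, Sum.inr x.2} : Finset (Fin p ⊕ Fin q)) = {Sum.inl z.1, Sum.inr z.2}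
        then ψ h.choose else ∅) = ψ x := by
    intro x
    have h : ∃ z : Fin p × Fin q,
        ({Sum.inl x.1, Sum.inr x.2} : Finset (Fin p ⊕ Fin q)) = {Sum.inl z.1, Sum.inr z.2} :=
      ⟨x, rfl⟩
    rw [dif_pos h]
    congr 1
    have hc := h.choose_spec
    have h1 : (Sum.inl h.choose.1 : Fin p ⊕ Fin q) ∈
        ({Sum.inl x.1, Sum.inr x.2} : Finset (Fin p ⊕ Fin q)) :=
      (Finset.ext_iff.mp hc _).2 (by simp)
    have h2 : (Sum.inr h.choose.2 : Fin p ⊕ Fin q) ∈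
        ({Sum.inl x.1, Sum.inr x.2} : Finset (Fin p ⊕ Fin q)) :=
      (Finset.ext_iff.mp hc _).2 (by simp)
    simp only [mem_insert, mem_singleton] at h1 h2
    rcases h1 with h1 | h1
    · rcases h2 with h2 | h2
      · exact absurd h2 (by simp)
      · exact Prod.ext (Sum.inl.inj h1) (Sum.inr.inj h2)
    · exact absurd h1 (by simp)
  refine ⟨fun z => (g0 z : V),
    fun e => if h : ∃ z : Fin p × Fin q, e = {Sum.inl z.1, Sum.inr z.2}
      then ψ h.choose else ∅,
    fun x y hxy => g0.injective (Subtype.ext hxy), ?_, ?_, ?_⟩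
  · intro e he e' he' heq
    simp only [completeBipartite, coe_image, Set.mem_image] at he he'
    obtain ⟨x, -, rfl⟩ := he
    obtain ⟨x', -, rfl⟩ := he'
    have hne : ψ x = ψ x' := (key x).symm.trans (heq.trans (key x'))
    rw [hψinj hne]
  · intro e he
    simp only [completeBipartite, mem_image] at he
    obtain ⟨x, -, rfl⟩ := he
    exact Eq.mpr (congrArg (· ∈ H) (key x)) (hSH (ψ0 x).2)
  · intro e he
    simp only [completeBipartite, mem_image] at he
    obtain ⟨x, -, rfl⟩ := he
    have hDe : D ⊆ ψ x := hDS _ (ψ0 x).2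
    have hsub : Finset.image (fun z : Fin p ⊕ Fin q => (g0 z : V))
        {Sum.inl x.1, Sum.inr x.2} ⊆ ψ x := by
      rw [Finset.image_insert, Finset.image_singleton]
      exact Finset.insert_subset (hDe (g0 (Sum.inl x.1)).2)
        (Finset.singleton_subset_iff.2 (hDe (g0 (Sum.inr x.2)).2))
    exact Eq.mpr (congrArg (fun z => Finset.image (fun z : Fin p ⊕ Fin q => (g0 z : V))
      {Sum.inl x.1, Sum.inr x.2} ⊆ z) (key x)) hsub

end Aux
lemma main_bound {V : Type*} [DecidableEq V] {s r p q : ℕ}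
    (hs : 1 ≤ s) (hr : 2 ≤ r) (hp : 1 ≤ p) (hq : 1 ≤ q)
    (h1 : p + q < r) (h2 : r = s + 1)
    (H : Finset (Finset V)) (hU : IsUniform r H)
    (hM : ¬ ContainsBerge (matchingHG (s + 1)) H)
    (hK : ¬ ContainsBerge (completeBipartite p q) H) :
    H.card ≤ s + Nat.choose (2 * s) r + Nat.choose (2 * s) (r - 1) * (p * q - 1) := by
  classical
  set P := MStruct H with hPdef
  set t := Nat.findGreatest P s with htdef
  have hts : t ≤ s := Nat.findGreatest_le s
  have hP0 : P 0 := by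
    refine ⟨Fin.elim0, Fin.elim0, ?_, ?_, ?_, ?_⟩
    · intro i; exact i.elim0
    · intro i; exact i.elim0
    · intro x; exact x.1.elim0
    · intro i; exact i.elim0
  have hPt : P t := Nat.findGreatest_spec (Nat.zero_le s) hP0
  have hnot : ¬ P (t + 1) := by
    rcases le_or_gt (t + 1) s with h | h
    · exact Nat.findGreatest_is_greatest (Nat.lt_succ_self t) h
    · intro hPt1
      have heq : t + 1 = s + 1 := by omega
      exact hM (mstruct_to_berge (heq ▸ hPt1))
  obtain ⟨E, a, hE, hEH, ha, hm⟩ := hPt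
  set B : Finset V := Finset.image (fun x : Fin t × Fin 2 => a x.1 x.2) Finset.univ with hB
  have hBcard : B.card = 2 * t := by
    rw [hB, Finset.card_image_of_injective _ ha, Finset.card_univ]
    simp [mul_comm]
  have haB : ∀ i j, a i j ∈ B := fun i j => Finset.mem_image.2 ⟨(i, j), Finset.mem_univ _, rfl⟩
  -- classification of hyperedges
  have hclass : ∀ e ∈ H, (∃ i, E i = e) ∨ e ⊆ B ∨ (e \ B).card = 1 := by
    intro e he
    by_contra hcon
    push_neg at hcon
    obtain ⟨hne, hnsub, hone⟩ := hcon
    have h0 : (e \ B).card ≠ 0 := fun h0 =>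
      hnsub (Finset.sdiff_eq_empty_iff_subset.mp (Finset.card_eq_zero.mp h0))
    have h2le : 1 < (e \ B).card := by omega
    obtain ⟨x, hx, y, hy, hxy⟩ := Finset.one_lt_card.mp h2le
    have hxB : x ∉ B := (Finset.mem_sdiff.mp hx).2
    have hyB : y ∉ B := (Finset.mem_sdiff.mp hy).2
    have hxe : x ∈ e := (Finset.mem_sdiff.mp hx).1
    have hye : y ∈ e := (Finset.mem_sdiff.mp hy).1
    apply hnot
    refine ⟨Fin.snoc E e, Fin.snoc a (fun j => if j = 0 then x else y), ?_, ?_, ?_, ?_⟩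
    · intro i j hij
      rcases Fin.eq_castSucc_or_eq_last i with ⟨i', rfl⟩ | rfl
      · rcases Fin.eq_castSucc_or_eq_last j with ⟨j', rfl⟩ | rfl
        · rw [Fin.snoc_castSucc, Fin.snoc_castSucc] at hij
          exact congrArg Fin.castSucc (hE hij)
        · rw [Fin.snoc_castSucc, Fin.snoc_last] at hij
          exact absurd hij (hne i')
      · rcases Fin.eq_castSucc_or_eq_last j with ⟨j', rfl⟩ | rfl
        · rw [Fin.snoc_last, Fin.snoc_castSucc] at hij
          exact absurd hij.symm (hne j')
        · rfl
    · intro i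
      rcases Fin.eq_castSucc_or_eq_last i with ⟨i', rfl⟩ | rfl
      · rw [Fin.snoc_castSucc]; exact hEH i'
      · rw [Fin.snoc_last]; exact he
    · rintro ⟨i, j⟩ ⟨i', j'⟩ hzw
      dsimp only at hzw
      rcases Fin.eq_castSucc_or_eq_last i with ⟨i0, rfl⟩ | rfl
      · rcases Fin.eq_castSucc_or_eq_last i' with ⟨i1, rfl⟩ | rfl
        · rw [Fin.snoc_castSucc, Fin.snoc_castSucc] at hzw
          have hpp := ha (show (fun x : Fin t × Fin 2 => a x.1 x.2) (i0, j)
            = (fun x : Fin t × Fin 2 => a x.1 x.2) (i1, j') from hzw)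
          rw [Prod.ext_iff] at hpp
          exact Prod.ext (congrArg Fin.castSucc hpp.1) hpp.2
        · rw [Fin.snoc_castSucc, Fin.snoc_last] at hzw
          have hmemB : a i0 j ∈ B := haB i0 j
          rw [hzw] at hmemB
          split_ifs at hmemB
          · exact absurd hmemB hxB
          · exact absurd hmemB hyB
      · rcases Fin.eq_castSucc_or_eq_last i' with ⟨i1, rfl⟩ | rfl
        · rw [Fin.snoc_last, Fin.snoc_castSucc] at hzw
          have hmemB : a i1 j' ∈ B := haB i1 j'
          rw [← hzw] at hmemB
          split_ifs at hmemB
          · exact absurd hmemB hxB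
          · exact absurd hmemB hyB
        · fin_cases j <;> fin_cases j' <;> simp_all
    · intro i j
      rcases Fin.eq_castSucc_or_eq_last i with ⟨i0, rfl⟩ | rfl
      · rw [Fin.snoc_castSucc, Fin.snoc_castSucc]; exact hm i0 j
      · rw [Fin.snoc_last, Fin.snoc_last]
        split_ifs
        · exact hxe
        · exact hye
  -- fiber bound
  have hpq1 : 1 ≤ p * q := Nat.one_le_iff_ne_zero.2 (by positivity)
  set H3 : Finset (Finset V) := H.filter (fun e => (e \ B).card = 1) with hH3
  have hfiber : ∀ D ∈ H3.image (fun e => e ∩ B),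
      (H3.filter (fun e => e ∩ B = D)).card ≤ p * q - 1 := by
    intro D hD
    by_contra hcon
    push_neg at hcon
    have hpqle : p * q ≤ (H3.filter (fun e => e ∩ B = D)).card := by omega
    set S := H3.filter (fun e => e ∩ B = D) with hS
    have hSne : S.Nonempty := Finset.card_pos.mp (by omega)
    obtain ⟨e₀, he₀⟩ := hSne
    have he₀3 := Finset.mem_filter.mp he₀
    have he₀H3 := Finset.mem_filter.mp he₀3.1
    have hDcard : D.card = r - 1 := by
      have hce : e₀.card = r := hU e₀ he₀H3.1
      have := Finset.card_inter_add_card_sdiff e₀ B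
      rw [he₀3.2, he₀H3.2, hce] at this
      omega
    apply hK
    refine berge_kpq D S ?_ hpqle ?_ ?_
    · omega
    · exact fun e he => (Finset.mem_filter.mp (Finset.mem_filter.mp he).1).1
    · intro e he
      rw [← (Finset.mem_filter.mp he).2]
      exact Finset.inter_subset_left
  -- counting
  set H1 : Finset (Finset V) := Finset.image E Finset.univ with hH1
  set H2 : Finset (Finset V) := H.filter (fun e => e ⊆ B) with hH2
  have hcover : H ⊆ H1 ∪ (H2 ∪ H3) := by
    intro e he
    rcases hclass e he with ⟨i, hi⟩ | hsub | hone
    · exact Finset.mem_union_left _ (Finset.mem_image.2 ⟨i, Finset.mem_univ _, hi⟩)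
    · exact Finset.mem_union_right _ (Finset.mem_union_left _ (Finset.mem_filter.2 ⟨he, hsub⟩))
    · exact Finset.mem_union_right _ (Finset.mem_union_right _ (Finset.mem_filter.2 ⟨he, hone⟩))
  have hc1 : H1.card ≤ s := by
    refine le_trans Finset.card_image_le ?_
    simpa using hts
  have hc2 : H2.card ≤ Nat.choose (2 * s) r := by
    have hsub : H2 ⊆ Finset.powersetCard r B := by
      intro e he
      have := Finset.mem_filter.mp he
      exact Finset.mem_powersetCard.2 ⟨this.2, hU e this.1⟩
    refine le_trans (Finset.card_le_card hsub) ?_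
    rw [Finset.card_powersetCard, hBcard]
    exact Nat.choose_le_choose r (by omega)
  have hc3 : H3.card ≤ Nat.choose (2 * s) (r - 1) * (p * q - 1) := by
    have hkey := Finset.card_le_mul_card_image (f := fun e => e ∩ B) H3 (p * q - 1) hfiber
    have himg : (H3.image (fun e => e ∩ B)).card ≤ Nat.choose (2 * s) (r - 1) := by
      have hsub : H3.image (fun e => e ∩ B) ⊆ Finset.powersetCard (r - 1) B := by
        intro D hD
        obtain ⟨e, he, hDe⟩ := Finset.mem_image.mp hD
        have heH3 := Finset.mem_filter.mp he
        have hce : e.card = r := hU e heH3.1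
        have hcc := Finset.card_inter_add_card_sdiff e B
        rw [heH3.2, hce] at hcc
        refine Finset.mem_powersetCard.2 ⟨?_, ?_⟩
        · rw [← hDe]; exact Finset.inter_subset_right
        · rw [← hDe]; omega
      refine le_trans (Finset.card_le_card hsub) ?_
      rw [Finset.card_powersetCard, hBcard]
      exact Nat.choose_le_choose _ (by omega)
    calc H3.card ≤ (p * q - 1) * (H3.image (fun e => e ∩ B)).card := hkey
      _ ≤ (p * q - 1) * Nat.choose (2 * s) (r - 1) := Nat.mul_le_mul_left _ himg
      _ = Nat.choose (2 * s) (r - 1) * (p * q - 1) := Nat.mul_comm _ _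
  have := Finset.card_le_card hcover
  have hu1 := Finset.card_union_le H1 (H2 ∪ H3)
  have hu2 := Finset.card_union_le H2 H3
  omega

/-- Proposition: for `1 ≤ p ≤ q` with `p+q < r = s+1`, for all sufficiently large `n`,
`ex_r(n, BM_{s+1} ∪ BK_{p,q}) ≤ s + C(2s, r) + C(2s, r-1)(pq-1)`. -/
theorem exr_berge_matching_and_berge_Kpq_small_pq
    (s r p q : ℕ) (hs : 1 ≤ s) (hr : 2 ≤ r) (hp : 1 ≤ p) (hpq : p ≤ q)
    (h1 : p + q < r) (h2 : r = s + 1) :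
    ∃ n₀ : ℕ, ∀ n : ℕ, n₀ ≤ n →
      exr n r (fun H => ¬ ContainsBerge (matchingHG (s + 1)) H ∧
          ¬ ContainsBerge (completeBipartite p q) H) ≤
        s + Nat.choose (2 * s) r + Nat.choose (2 * s) (r - 1) * (p * q - 1) := by
  refine ⟨0, fun n _ => ?_⟩
  apply csSup_le'
  rintro m ⟨H, hU, ⟨hM, hK⟩, rfl⟩
  exact main_bound hs hr hp (hp.trans hpq) h1 h2 H hU hM hK
end

section
/- Let r ≥ 2 be an integer and let 𝔉 be a finite family of graphs. Then for every n, ex_r(n, B𝔉) ≤ max{ e(G_red) + N(K_r, G_blue) : G is an n-vertex 𝔉-free graph and the edges of G are partitioned into a red set spanning G_red and a blue set spanning G_blue }. -/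
/-!
Choose `W ⊆ H` maximising `|W| - |∂W|`, where `∂W` is the set of pairs covered by a hyperedge
of `W`; colour the pairs of `∂W` blue. Maximality gives two Hall conditions: every hyperedge
of `H \ W` can be assigned its own pair outside `∂W` (these are the red pairs), and every
blue pair can be assigned its own hyperedge of `W` containing it. The red and blue pairs
thus form a graph `G` whose edges lift injectively to hyperedges containing them, so a copy
of `F` in `G` lifts to a Berge-`F` in `H`. Finally `|H \ W|` is the number of red edges,
and every hyperedge of `W` spans a blue `K_r`.
-/

open Finset

/-- The number of copies of the complete graph `K_k` in the graph with edge set `G`: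
the number of `k`-element vertex subsets all of whose pairs are edges of `G`. -/
def countClique {V : Type*} [Fintype V] [DecidableEq V] (k : ℕ)
    (G : Finset (Finset V)) : ℕ :=
  (((Finset.univ : Finset V).powersetCard k).filter
    fun S => ∀ x ∈ S, ∀ y ∈ S, x ≠ y → ({x, y} : Finset V) ∈ G).card

theorem Finset.exists_injOn_of_card_le_card_biUnion {ι α : Type*} [DecidableEq α] [Nonempty α]
    {s : Finset ι} (t : ι → Finset α) (h : ∀ u ⊆ s, #u ≤ #(u.biUnion t)) :
    ∃ f : ι → α, Set.InjOn f s ∧ ∀ i ∈ s, f i ∈ t i := by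
  classical
  have hall : ∀ u : Finset s, #u ≤ #(u.biUnion fun i => t i) := fun u => by
    simpa [image_biUnion, card_image_of_injective _ Subtype.val_injective] using
      h (u.image Subtype.val) (by simp +contextual [subset_iff])
  obtain ⟨f, hinj, hf⟩ := (all_card_le_biUnion_card_iff_exists_injective _).mp hall
  refine ⟨fun i => if hi : i ∈ s then f ⟨i, hi⟩ else Classical.arbitrary α, ?_, ?_⟩
  · intro i hi j hj hij
    simp only [dif_pos (mem_coe.1 hi), dif_pos (mem_coe.1 hj)] at hij
    exact congrArg Subtype.val (hinj hij)
  · intro i hi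
    simpa [dif_pos hi] using hf ⟨i, hi⟩

section PairShadow

variable {V : Type*} [DecidableEq V]

def pairShadow (A : Finset (Finset V)) : Finset (Finset V) :=
  A.biUnion (powersetCard 2)

theorem mem_pairShadow {A : Finset (Finset V)} {p : Finset V} :
    p ∈ pairShadow A ↔ ∃ h ∈ A, p ⊆ h ∧ #p = 2 := by
  simp [pairShadow]

theorem isUniform_two_pairShadow (A : Finset (Finset V)) : IsUniform 2 (pairShadow A) :=
  fun _ hp => by
    obtain ⟨_, _, _, hp2⟩ := mem_pairShadow.1 hp
    exact hp2

theorem pairShadow_union (A B : Finset (Finset V)) :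
    pairShadow (A ∪ B) = pairShadow A ∪ pairShadow B :=
  union_biUnion

def pairSurplus (A : Finset (Finset V)) : ℤ :=
  #A - #(pairShadow A)

variable {H W : Finset (Finset V)}

theorem card_le_card_biUnion_of_pairSurplus_le (hWH : W ⊆ H)
    (hmax : ∀ A ⊆ H, pairSurplus A ≤ pairSurplus W) {A : Finset (Finset V)} (hA : A ⊆ H \ W) :
    #A ≤ #(A.biUnion fun h => h.powersetCard 2 \ pairShadow W) := by
  have hunion : A.biUnion (fun h => h.powersetCard 2 \ pairShadow W) =
      pairShadow A \ pairShadow W := by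
    ext p; simp only [pairShadow, mem_biUnion, mem_sdiff]; aesop
  have hWA := hmax (W ∪ A) (union_subset hWH (hA.trans sdiff_subset))
  rw [pairSurplus, pairSurplus, card_union_of_disjoint (disjoint_sdiff.mono_right hA),
    pairShadow_union, union_comm, ← card_sdiff_add_card] at hWA
  rw [hunion]
  omega

theorem card_le_card_biUnion_filter_of_pairSurplus_le (hWH : W ⊆ H)
    (hmax : ∀ A ⊆ H, pairSurplus A ≤ pairSurplus W) {P : Finset (Finset V)}
    (hP : P ⊆ pairShadow W) : #P ≤ #(P.biUnion fun p => W.filter (p ⊆ ·)) := by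
  set B := P.biUnion fun p => W.filter (p ⊆ ·)
  have hBW : B ⊆ W := biUnion_subset.2 fun _ _ => filter_subset _ _
  have hshadow : pairShadow (W \ B) ⊆ pairShadow W \ P := by
    intro p hp
    obtain ⟨h, hh, hph, hp2⟩ := mem_pairShadow.1 hp
    rw [mem_sdiff] at hh ⊢
    refine ⟨mem_pairShadow.2 ⟨h, hh.1, hph, hp2⟩, fun hpP => hh.2 ?_⟩
    exact mem_biUnion.2 ⟨p, hpP, mem_filter.2 ⟨hh.1, hph⟩⟩
  have hWB := hmax (W \ B) (sdiff_subset.trans hWH)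
  rw [pairSurplus, pairSurplus, card_sdiff_of_subset hBW] at hWB
  have hshadow_card := card_le_card hshadow
  rw [card_sdiff_of_subset hP] at hshadow_card
  have hBcard := card_le_card hBW
  have hPcard := card_le_card hP
  omega

theorem exists_red_pairs (hWH : W ⊆ H) (hmax : ∀ A ⊆ H, pairSurplus A ≤ pairSurplus W) :
    ∃ R : Finset (Finset V), ∃ χ : Finset V → Finset V,
      Disjoint R (pairShadow W) ∧ IsUniform 2 R ∧ #R = #(H \ W) ∧
      Set.InjOn χ R ∧ ∀ p ∈ R, χ p ∈ H \ W ∧ p ⊆ χ p := by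
  obtain ⟨f, hfinj, hf⟩ := exists_injOn_of_card_le_card_biUnion _
    fun _ => card_le_card_biUnion_of_pairSurplus_le hWH hmax
  replace hf : ∀ h ∈ H \ W, (f h ⊆ h ∧ #(f h) = 2) ∧ f h ∉ pairShadow W :=
    fun h hh => by simpa only [mem_sdiff, mem_powersetCard] using hf h hh
  have hinv : ∀ p ∈ (H \ W).image f,
      Function.invFunOn f ↑(H \ W) p ∈ H \ W ∧ f (Function.invFunOn f ↑(H \ W) p) = p :=
    fun p hp => Function.invFunOn_pos (mem_image.1 hp)
  refine ⟨(H \ W).image f, Function.invFunOn f ↑(H \ W), ?_, ?_, card_image_of_injOn hfinj,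
    by simpa using Function.invFunOn_injOn_image f ↑(H \ W), fun p hp => ⟨(hinv p hp).1, ?_⟩⟩
  · refine disjoint_left.2 fun p hp => ?_
    obtain ⟨h, hh, rfl⟩ := mem_image.1 hp
    exact (hf h hh).2
  · intro p hp
    obtain ⟨h, hh, rfl⟩ := mem_image.1 hp
    exact (hf h hh).1.2
  · obtain ⟨hmem, heq⟩ := hinv p hp
    simpa only [heq] using (hf _ hmem).1.1

theorem exists_blue_lift (hWH : W ⊆ H) (hmax : ∀ A ⊆ H, pairSurplus A ≤ pairSurplus W) :
    ∃ ψ : Finset V → Finset V,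
      Set.InjOn ψ (pairShadow W) ∧ ∀ p ∈ pairShadow W, ψ p ∈ W ∧ p ⊆ ψ p := by
  obtain ⟨ψ, hψinj, hψ⟩ := exists_injOn_of_card_le_card_biUnion _
    fun _ => card_le_card_biUnion_filter_of_pairSurplus_le hWH hmax
  exact ⟨ψ, hψinj, fun p hp => mem_filter.1 (hψ p hp)⟩

theorem exists_red_blue_lift (H : Finset (Finset V)) :
    ∃ R W : Finset (Finset V), ∃ χ : Finset V → Finset V,
      W ⊆ H ∧ Disjoint R (pairShadow W) ∧ IsUniform 2 R ∧ #H ≤ #R + #W ∧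
      Set.InjOn χ ↑(R ∪ pairShadow W) ∧ ∀ p ∈ R ∪ pairShadow W, χ p ∈ H ∧ p ⊆ χ p := by
  obtain ⟨W, hWH, hmax⟩ : ∃ W ⊆ H, ∀ A ⊆ H, pairSurplus A ≤ pairSurplus W := by
    simpa using exists_max_image H.powerset pairSurplus ⟨∅, empty_mem_powerset H⟩
  obtain ⟨R, χ, hdisj, hR2, hRcard, hχinj, hχ⟩ := exists_red_pairs hWH hmax
  obtain ⟨ψ, hψinj, hψ⟩ := exists_blue_lift hWH hmax
  have hRχ : Set.EqOn ((pairShadow W).piecewise ψ χ) χ R := fun p hp =>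
    piecewise_eq_of_notMem _ _ _ (disjoint_left.1 hdisj hp)
  have hDψ : Set.EqOn ((pairShadow W).piecewise ψ χ) ψ (pairShadow W) := fun p hp =>
    piecewise_eq_of_mem _ _ _ hp
  refine ⟨R, W, (pairShadow W).piecewise ψ χ, hWH, hdisj, hR2,
    (hRcard ▸ card_sdiff_add_card_eq_card hWH).ge, ?_, ?_⟩
  · rw [coe_union, Set.injOn_union (disjoint_coe.2 hdisj)]
    refine ⟨(hRχ.injOn_iff).2 hχinj, (hDψ.injOn_iff).2 hψinj, fun p hp q hq hpq => ?_⟩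
    rw [hRχ hp, hDψ hq] at hpq
    exact (mem_sdiff.1 (hχ p hp).1).2 (hpq ▸ (hψ q hq).1)
  · intro p hp
    rcases mem_union.1 hp with hp | hp
    · rw [hRχ hp]
      exact ⟨(mem_sdiff.1 (hχ p hp).1).1, (hχ p hp).2⟩
    · rw [hDψ hp]
      exact ⟨hWH (hψ p hp).1, (hψ p hp).2⟩

theorem card_le_countClique_pairShadow [Fintype V] {r : ℕ} {W : Finset (Finset V)}
    (hW : IsUniform r W) : #W ≤ countClique r (pairShadow W) := by
  refine card_le_card fun h hh => mem_filter.2 ⟨mem_powersetCard_univ.2 (hW h hh), ?_⟩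
  intro x hx y hy hxy
  exact mem_pairShadow.2 ⟨h, hh, insert_subset hx (singleton_subset_iff.2 hy), card_pair hxy⟩

end PairShadow

theorem containsBerge_of_containsCopy {α V : Type*} [DecidableEq α] [Fintype α] [DecidableEq V]
    {F : Finset (Finset α)} {G H : Finset (Finset V)} {χ : Finset V → Finset V}
    (hχinj : Set.InjOn χ G) (hχ : ∀ p ∈ G, χ p ∈ H ∧ p ⊆ χ p)
    (hF : ContainsCopy univ F G) : ContainsBerge F H := by
  obtain ⟨g, hginj, hgF⟩ := hF
  rw [coe_univ, Set.injOn_univ] at hginj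
  refine ⟨g, fun e => χ (e.image g), hginj, ?_, fun e he => (hχ _ (hgF e he)).1,
    fun e he => (hχ _ (hgF e he)).2⟩
  intro e he e' he' hee'
  exact image_injective hginj (hχinj (hgF e he) (hgF e' he') hee')

theorem exr_berge_family_le_red_blue_general
    (r : ℕ) {ι : Type} (m : ι → ℕ)
    (𝓕 : ∀ i, Finset (Finset (Fin (m i)))) (n : ℕ) :
    exr n r (fun H => ∀ i, ¬ ContainsBerge (𝓕 i) H) ≤
      sSup {t | ∃ G R : Finset (Finset (Fin n)), IsUniform 2 G ∧ R ⊆ G ∧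
        (∀ i, ¬ ContainsCopy Finset.univ (𝓕 i) G) ∧
        t = R.card + countClique r (G \ R)} := by
  refine csSup_le' ?_
  rintro _ ⟨H, hHr, hHfree, rfl⟩
  obtain ⟨R, W, χ, hWH, hdisj, hR2, hHcard, hχinj, hχ⟩ := exists_red_blue_lift H
  have hG2 : IsUniform 2 (R ∪ pairShadow W) := fun p hp =>
    (mem_union.1 hp).elim (hR2 p) (isUniform_two_pairShadow W p)
  have hbdd : BddAbove {t | ∃ G R : Finset (Finset (Fin n)), IsUniform 2 G ∧ R ⊆ G ∧
      (∀ i, ¬ ContainsCopy Finset.univ (𝓕 i) G) ∧ t = R.card + countClique r (G \ R)} := by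
    refine ⟨Fintype.card (Finset (Fin n)) + Fintype.card (Finset (Fin n)), ?_⟩
    rintro _ ⟨G, R, -, -, -, rfl⟩
    exact add_le_add (card_le_univ _) (card_le_univ _)
  have hWr : IsUniform r W := fun h hh => hHr h (hWH hh)
  calc #H ≤ #R + countClique r (pairShadow W) :=
        hHcard.trans (Nat.add_le_add_left (card_le_countClique_pairShadow hWr) _)
    _ ≤ _ := le_csSup hbdd ⟨R ∪ pairShadow W, R, hG2, subset_union_left,
        fun i hi => hHfree i (containsBerge_of_containsCopy hχinj hχ hi),
        by rw [union_sdiff_cancel_left hdisj]⟩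

/-- Lemma: for a finite family `𝓕` of graphs (indexed by a finite type),
`ex_r(n, B𝓕)` is at most the maximum, over `n`-vertex `𝓕`-free graphs `G` whose edge
set is partitioned into a red set `R` and a blue set `G \ R`, of
`e(G_red) + N(K_r, G_blue)`. -/
theorem exr_berge_family_le_red_blue
    (r : ℕ) (hr : 2 ≤ r) {ι : Type} [Fintype ι] (m : ι → ℕ)
    (𝓕 : ∀ i, Finset (Finset (Fin (m i)))) (h2 : ∀ i, IsUniform 2 (𝓕 i)) (n : ℕ) :
    exr n r (fun H => ∀ i, ¬ ContainsBerge (𝓕 i) H) ≤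
      sSup {t | ∃ G R : Finset (Finset (Fin n)), IsUniform 2 G ∧ R ⊆ G ∧
        (∀ i, ¬ ContainsCopy Finset.univ (𝓕 i) G) ∧
        t = R.card + countClique r (G \ R)} :=
  exr_berge_family_le_red_blue_general r m 𝓕 n
end

section
/- Let r ≥ 3 be an integer, 𝔉 a finite family of graphs, and f ≥ 0 a real number such that ex(m, K_{r−1}, 𝔉⁻) ≤ f·m for every positive integer m, where 𝔉⁻ is the family of all graphs obtained by deleting a single vertex from some member of 𝔉. Then for every n, ex_r(n, B𝔉) ≤ max{ 2f/r, 1 } · ex(n, 𝔉). -/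
open Finset

/-! Let `H` be a Berge-𝓕-free `r`-graph and view hyperedges and the pairs they contain as a
bipartite graph. Choose `C ⊆ H` maximising the deficiency `|C| - |∂C|`, where `∂C` is the set of
pairs inside members of `C`. By Hall's theorem there is a matching of hyperedges to pairs that
saturates `∂C` and misses only `|C| - |∂C|` hyperedges. Its pairs form an 𝓕-free graph `G` (a copy
of `F` in `G` is a Berge-`F` in `H`), so `|H| - |C| + |∂C| ≤ |G| ≤ ex(n, 𝓕)`. On the other hand,
the hyperedges of `C` through a vertex `v` are `(r-1)`-cliques in the link of `v` in `∂C`, an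
𝓕⁻-free graph on `deg v` vertices; summing over `v` gives `r |C| ≤ 2 f |∂C|`. The two
inequalities combine to the bound. -/

theorem Finset.exists_injOn_mem_of_card_le_biUnion {ι α : Type*} [DecidableEq α] [Nonempty α]
    {X : Finset ι} (t : ι → Finset α) (h : ∀ s ⊆ X, #s ≤ #(s.biUnion t)) :
    ∃ f : ι → α, Set.InjOn f X ∧ ∀ x ∈ X, f x ∈ t x := by
  classical
  obtain ⟨g, hg, hgt⟩ := (all_card_le_biUnion_card_iff_exists_injective fun x : X => t x).1
    fun s => by
      simpa [image_biUnion, card_image_of_injective _ Subtype.val_injective] using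
        h (s.image Subtype.val) fun x hx => by
          obtain ⟨y, -, rfl⟩ := mem_image.1 hx
          exact y.2
  refine ⟨fun x => if hx : x ∈ X then g ⟨x, hx⟩ else Classical.arbitrary α, ?_, ?_⟩
  · intro x hx y hy hxy
    simp only [mem_coe] at hx hy
    exact congrArg Subtype.val (@hg ⟨x, hx⟩ ⟨y, hy⟩ (by simpa [hx, hy] using hxy))
  · intro x hx
    simpa [hx] using hgt ⟨x, hx⟩

section Deficiency

variable {α β : Type*} [DecidableEq α] [DecidableEq β] {H C : Finset β} {t : β → Finset α}

def deficiency (t : β → Finset α) (C : Finset β) : ℤ :=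
  #C - #(C.biUnion t)

theorem card_le_card_biUnion_filter_of_maxDeficiency (hCH : C ⊆ H)
    (hmax : ∀ C' ⊆ H, deficiency t C' ≤ deficiency t C) {s : Finset α} (hs : s ⊆ C.biUnion t) :
    #s ≤ #(s.biUnion fun a => C.filter (a ∈ t ·)) := by
  set B := s.biUnion fun a => C.filter (a ∈ t ·)
  have hBC : B ⊆ C := biUnion_subset.2 fun _ _ => filter_subset _ _
  have hN : (C \ B).biUnion t ⊆ C.biUnion t \ s := by
    intro a ha
    obtain ⟨h, hh, hah⟩ := mem_biUnion.1 ha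
    obtain ⟨hhC, hhB⟩ := mem_sdiff.1 hh
    exact mem_sdiff.2 ⟨mem_biUnion.2 ⟨h, hhC, hah⟩,
      fun has => hhB (mem_biUnion.2 ⟨a, has, mem_filter.2 ⟨hhC, hah⟩⟩)⟩
  have h1 := hmax (C \ B) (sdiff_subset.trans hCH)
  have h2 := card_le_card hN
  rw [deficiency, deficiency, card_sdiff_of_subset hBC] at h1
  rw [card_sdiff_of_subset hs] at h2
  have := card_le_card hBC
  have := card_le_card hs
  omega

theorem card_le_card_biUnion_sdiff_of_maxDeficiency (hCH : C ⊆ H)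
    (hmax : ∀ C' ⊆ H, deficiency t C' ≤ deficiency t C) {s : Finset β} (hs : s ⊆ H \ C) :
    #s ≤ #(s.biUnion fun h => t h \ C.biUnion t) := by
  have hdisj : Disjoint C s := disjoint_of_subset_right hs disjoint_sdiff
  have hN : (C ∪ s).biUnion t ⊆ C.biUnion t ∪ s.biUnion fun h => t h \ C.biUnion t := by
    intro a ha
    rw [union_biUnion, mem_union] at ha
    rcases ha with ha | ha
    · exact mem_union_left _ ha
    · by_cases haC : a ∈ C.biUnion t
      · exact mem_union_left _ haC
      · obtain ⟨h, hh, hah⟩ := mem_biUnion.1 ha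
        exact mem_union_right _ (mem_biUnion.2 ⟨h, hh, mem_sdiff.2 ⟨hah, haC⟩⟩)
  have h1 := hmax (C ∪ s) (union_subset hCH (hs.trans sdiff_subset))
  have h2 := (card_le_card hN).trans (card_union_le _ _)
  rw [deficiency, deficiency, card_union_of_disjoint hdisj] at h1
  omega

theorem exists_matching_saturating_biUnion_of_maxDeficiency [Nonempty α] [Nonempty β]
    (hCH : C ⊆ H) (hmax : ∀ C' ⊆ H, deficiency t C' ≤ deficiency t C) :
    ∃ G : Finset α, C.biUnion t ⊆ G ∧ #H + #(C.biUnion t) = #G + #C ∧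
      ∃ σ : α → β, Set.InjOn σ G ∧ ∀ a ∈ G, σ a ∈ H ∧ a ∈ t (σ a) := by
  obtain ⟨σ, hσinj, hσ⟩ := exists_injOn_mem_of_card_le_biUnion (X := C.biUnion t)
    (fun a => C.filter (a ∈ t ·)) fun s hs =>
      card_le_card_biUnion_filter_of_maxDeficiency hCH hmax hs
  obtain ⟨ψ, hψinj, hψ⟩ := exists_injOn_mem_of_card_le_biUnion (X := H \ C)
    (fun h => t h \ C.biUnion t) fun s hs =>
      card_le_card_biUnion_sdiff_of_maxDeficiency hCH hmax hs
  have hψN : ∀ h ∈ H \ C, ψ h ∉ C.biUnion t := fun h hh => (mem_sdiff.1 (hψ h hh)).2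
  have hdisj : Disjoint (C.biUnion t) ((H \ C).image ψ) :=
    disjoint_right.2 fun _ ha => by
      obtain ⟨h, hh, rfl⟩ := mem_image.1 ha
      exact hψN h hh
  let τ : α → β := fun a =>
    if a ∈ C.biUnion t then σ a else Function.invFunOn ψ (↑(H \ C) : Set β) a
  have hτN : ∀ a ∈ C.biUnion t, τ a = σ a := fun a ha => if_pos ha
  have hτψ : ∀ h ∈ H \ C, τ (ψ h) = h := fun h hh => by
    simp only [τ, if_neg (hψN h hh)]
    exact hψinj.leftInvOn_invFunOn hh
  refine ⟨C.biUnion t ∪ (H \ C).image ψ, subset_union_left, ?_, τ, ?_, ?_⟩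
  · rw [card_union_of_disjoint hdisj, card_image_of_injOn hψinj, card_sdiff_of_subset hCH]
    have := card_le_card hCH
    omega
  · intro a ha b hb hab
    simp only [coe_union, coe_image, Set.mem_union, mem_coe, Set.mem_image] at ha hb
    rcases ha with ha | ⟨h, hh, rfl⟩ <;> rcases hb with hb | ⟨h', hh', rfl⟩
    · rw [hτN a ha, hτN b hb] at hab
      exact hσinj ha hb hab
    · rw [hτN a ha, hτψ h' hh'] at hab
      exact absurd (hab ▸ (mem_filter.1 (hσ a ha)).1) (mem_sdiff.1 hh').2
    · rw [hτN b hb, hτψ h hh] at hab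
      exact absurd (hab ▸ (mem_filter.1 (hσ b hb)).1) (mem_sdiff.1 hh).2
    · rw [hτψ h hh, hτψ h' hh'] at hab
      rw [hab]
  · intro a ha
    rcases mem_union.1 ha with ha | ha
    · obtain ⟨hσC, hσt⟩ := mem_filter.1 (hσ a ha)
      exact hτN a ha ▸ ⟨hCH hσC, hσt⟩
    · obtain ⟨h, hh, rfl⟩ := mem_image.1 ha
      exact (hτψ h hh).symm ▸ ⟨(mem_sdiff.1 hh).1, (mem_sdiff.1 (hψ h hh)).1⟩

theorem exists_matching_saturating_biUnion [Nonempty α] [Nonempty β] (H : Finset β)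
    (t : β → Finset α) :
    ∃ C ⊆ H, ∃ G : Finset α, C.biUnion t ⊆ G ∧ #H + #(C.biUnion t) = #G + #C ∧
      ∃ σ : α → β, Set.InjOn σ G ∧ ∀ a ∈ G, σ a ∈ H ∧ a ∈ t (σ a) := by
  obtain ⟨C, hC, hmax⟩ := exists_max_image H.powerset (deficiency t) ⟨∅, empty_mem_powerset H⟩
  rw [mem_powerset] at hC
  exact ⟨C, hC, exists_matching_saturating_biUnion_of_maxDeficiency hC
    fun C' hC' => hmax C' (mem_powerset.2 hC')⟩

end Deficiency

theorem Finset.exists_eq_pair_of_mem_of_card_eq_two {α : Type*} [DecidableEq α] {s : Finset α}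
    {a : α} (hs : #s = 2) (ha : a ∈ s) : ∃ b, b ≠ a ∧ s = {a, b} := by
  obtain ⟨x, y, hxy, rfl⟩ := card_eq_two.1 hs
  rcases mem_insert.1 ha with rfl | ha
  · exact ⟨y, hxy.symm, rfl⟩
  · rw [mem_singleton.1 ha]
    exact ⟨x, hxy, pair_comm _ _⟩

theorem ContainsCopy.mono {α V : Type*} [DecidableEq α] [DecidableEq V] {A : Finset α}
    {F : Finset (Finset α)} {G G' : Finset (Finset V)} (hG : G ⊆ G')
    (hF : ContainsCopy A F G) : ContainsCopy A F G' :=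
  let ⟨g, hg, hgF⟩ := hF
  ⟨g, hg, fun e he => hG (hgF e he)⟩

theorem ContainsCopy.containsBerge {α V : Type*} [DecidableEq α] [DecidableEq V] [Fintype α]
    {F : Finset (Finset α)} {G H : Finset (Finset V)} {σ : Finset V → Finset V}
    (hσ : Set.InjOn σ G) (hσH : ∀ p ∈ G, σ p ∈ H ∧ p ⊆ σ p)
    (hF : ContainsCopy univ F G) : ContainsBerge F H := by
  obtain ⟨g, hg, hgF⟩ := hF
  rw [coe_univ, Set.injOn_univ] at hg
  refine ⟨g, fun e => σ (e.image g), hg, ?_, fun e he => (hσH _ (hgF e he)).1,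
    fun e he => (hσH _ (hgF e he)).2⟩
  intro e he e' he' hee'
  exact image_injective hg (hσ (hgF e he) (hgF e' he') hee')

theorem card_le_exr {n r : ℕ} {Free : Finset (Finset (Fin n)) → Prop}
    {H : Finset (Finset (Fin n))} (hH : IsUniform r H) (hFree : Free H) :
    #H ≤ exr n r Free :=
  le_csSup ⟨_, fun _ ⟨H', _, _, hm⟩ => hm ▸ card_le_univ H'⟩ ⟨H, hH, hFree, rfl⟩

theorem exr_le_of_forall_card_le {n r : ℕ} {Free : Finset (Finset (Fin n)) → Prop} {B : ℝ}
    (hB : 0 ≤ B) (h : ∀ H, IsUniform r H → Free H → (#H : ℝ) ≤ B) :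
    (exr n r Free : ℝ) ≤ B := by
  have : exr n r Free ≤ ⌊B⌋₊ :=
    csSup_le' fun _ ⟨H, hH, hFree, hm⟩ => hm ▸ Nat.le_floor (h H hH hFree)
  exact (Nat.cast_le.2 this).trans (Nat.floor_le hB)

theorem countClique_le_choose {V : Type*} [Fintype V] [DecidableEq V] (k : ℕ)
    (G : Finset (Finset V)) : countClique k G ≤ (Fintype.card V).choose k :=
  (card_filter_le _ _).trans (by rw [card_powersetCard, card_univ])

/-- The generalized Turán number `ex(N, K_k, 𝓕)` when `Free` expresses 𝓕-freeness. -/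
noncomputable def exClique (N k : ℕ) (Free : Finset (Finset (Fin N)) → Prop) : ℕ :=
  sSup {t | ∃ G : Finset (Finset (Fin N)), IsUniform 2 G ∧ Free G ∧ t = countClique k G}

theorem countClique_le_exClique {N k : ℕ} {Free : Finset (Finset (Fin N)) → Prop}
    {G : Finset (Finset (Fin N))} (hG : IsUniform 2 G) (hFree : Free G) :
    countClique k G ≤ exClique N k Free :=
  le_csSup ⟨_, fun _ ⟨G', _, _, ht⟩ => ht ▸ countClique_le_choose k G'⟩ ⟨G, hG, hFree, rfl⟩

theorem countClique_le_mul_of_exClique_le {k : ℕ} (hk : 0 < k) {f : ℝ}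
    {Free : ∀ N, Finset (Finset (Fin N)) → Prop}
    (hf : ∀ N, 0 < N → (exClique N k (Free N) : ℝ) ≤ f * N) {N : ℕ}
    {L : Finset (Finset (Fin N))} (hL : IsUniform 2 L) (hFree : Free N L) :
    (countClique k L : ℝ) ≤ f * N := by
  rcases N.eq_zero_or_pos with rfl | hN
  · simp [countClique, Nat.choose_eq_zero_of_lt hk]
  · exact (Nat.cast_le.2 (countClique_le_exClique hL hFree)).trans (hf N hN)

section Link

variable {V W α : Type*}

noncomputable def pullback (e : W ↪ V) (P : Finset (Finset V)) : Finset (Finset W) :=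
  P.preimage (map e) (map_injective e).injOn

@[simp]
theorem mem_pullback {e : W ↪ V} {P : Finset (Finset V)} {q : Finset W} :
    q ∈ pullback e P ↔ q.map e ∈ P :=
  mem_preimage

theorem IsUniform.pullback {k : ℕ} {P : Finset (Finset V)} (hP : IsUniform k P) (e : W ↪ V) :
    IsUniform k (pullback e P) :=
  fun q hq => by simpa using hP _ (mem_pullback.1 hq)

variable [DecidableEq V]

theorem ContainsCopy.of_pullback [DecidableEq W] [DecidableEq α] [Fintype α]
    {P : Finset (Finset V)} (hP : IsUniform 2 P) {v : V} {e : W ↪ V} (he : ∀ w, {v, e w} ∈ P)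
    {F : Finset (Finset α)} (hF : IsUniform 2 F) {a : α}
    (h : ContainsCopy (univ.erase a) (F.filter (a ∉ ·)) (pullback e P)) :
    ContainsCopy univ F P := by
  obtain ⟨g, hg, hgF⟩ := h
  have hev : ∀ w, e w ≠ v := fun w hw => by simpa [hw] using hP _ (he w)
  let g' : α → V := fun x => if x = a then v else e (g x)
  refine ⟨g', fun x _ y _ hxy => ?_, fun ed hed => ?_⟩
  · by_cases hx : x = a <;> by_cases hy : y = a <;>
      simp only [g', hx, hy, if_true, if_false] at hxy
    · exact hx.trans hy.symm
    · exact absurd hxy.symm (hev _)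
    · exact absurd hxy (hev _)
    · exact hg (by simpa using hx) (by simpa using hy) (e.injective hxy)
  · by_cases ha : a ∈ ed
    · obtain ⟨b, hba, rfl⟩ := exists_eq_pair_of_mem_of_card_eq_two (hF ed hed) ha
      simpa [g', hba] using he (g b)
    · have : ed.image g' = (ed.image g).map e := by
        rw [map_eq_image, image_image]
        exact image_congr fun x hx => if_neg (ne_of_mem_of_not_mem hx ha)
      rw [this]
      exact mem_pullback.1 (hgF ed (mem_filter.2 ⟨hed, ha⟩))

theorem card_filter_mem_le_countClique_pullback [DecidableEq W] [Fintype W] {r : ℕ}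
    {C P : Finset (Finset V)} (hC : IsUniform r C) (hCP : ∀ h ∈ C, h.powersetCard 2 ⊆ P)
    {v : V} {e : W ↪ V} (he : ∀ u, {v, u} ∈ P → u ∈ Set.range e) :
    #(C.filter (v ∈ ·)) ≤ countClique (r - 1) (pullback e P) := by
  have hlift : ∀ h ∈ C.filter (v ∈ ·), ∃ s : Finset W, h.erase v = s.map e := by
    intro h hh
    obtain ⟨hhC, hv⟩ := mem_filter.1 hh
    have hsub : h.erase v ⊆ univ.map e := fun u hu => by
      obtain ⟨w, rfl⟩ := he u <| hCP h hhC <| mem_powersetCard.2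
        ⟨insert_subset hv (singleton_subset_iff.2 (mem_of_mem_erase hu)),
          card_pair (ne_of_mem_erase hu).symm⟩
      exact mem_map_of_mem e (mem_univ w)
    obtain ⟨s, -, hs⟩ := subset_map_iff.1 hsub
    exact ⟨s, hs⟩
  choose! lift hlift using hlift
  refine card_le_card_of_injOn lift (fun h hh => ?_) fun h₁ hh₁ h₂ hh₂ heq => ?_
  · obtain ⟨hhC, hv⟩ := mem_filter.1 hh
    have hsub : (lift h).map e ⊆ h := hlift h hh ▸ erase_subset v h
    refine mem_filter.2 ⟨mem_powersetCard.2 ⟨subset_univ _, ?_⟩, fun x hx y hy hxy => ?_⟩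
    · rw [← card_map e, ← hlift h hh, card_erase_of_mem hv, hC h hhC]
    · refine mem_pullback.2 (hCP h hhC (mem_powersetCard.2 ⟨?_, by rw [card_map, card_pair hxy]⟩))
      exact (map_subset_map.2 (insert_subset hx (singleton_subset_iff.2 hy))).trans hsub
  · rw [← insert_erase (mem_filter.1 hh₁).2, ← insert_erase (mem_filter.1 hh₂).2,
      hlift h₁ hh₁, hlift h₂ hh₂, heq]

end Link

theorem isUniform_biUnion_powersetCard {V : Type*} [DecidableEq V] (k : ℕ)
    (C : Finset (Finset V)) : IsUniform k (C.biUnion (powersetCard k)) := fun p hp => by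
  obtain ⟨h, -, hp⟩ := mem_biUnion.1 hp
  exact (mem_powersetCard.1 hp).2

section Degree

variable {V : Type*} [Fintype V] [DecidableEq V]

theorem sum_card_filter_mem_of_isUniform {r : ℕ} {C : Finset (Finset V)} (hC : IsUniform r C) :
    ∑ v, #(C.filter (v ∈ ·)) = r * #C := by
  have := sum_card_bipartiteAbove_eq_sum_card_bipartiteBelow (s := univ) (t := C) (· ∈ ·)
  simp only [bipartiteAbove, bipartiteBelow, filter_mem_eq_of_subset (subset_univ _)] at this
  rw [this, sum_congr rfl hC, sum_const, smul_eq_mul, mul_comm]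

theorem card_filter_pair_mem_eq {P : Finset (Finset V)} (hP : IsUniform 2 P) (v : V) :
    #(univ.filter fun u => {v, u} ∈ P) = #(P.filter (v ∈ ·)) := by
  have hne : ∀ u, {v, u} ∈ P → u ≠ v := fun u hu huv => by simpa [huv] using hP _ hu
  refine card_nbij (fun u => {v, u}) (fun u hu => ?_) (fun u hu u' hu' h => ?_) fun p hp => ?_
  · exact mem_filter.2 ⟨(mem_filter.1 hu).2, mem_insert_self v _⟩
  · replace h : ({v, u} : Finset V) = {v, u'} := h
    have : u ∈ ({v, u'} : Finset V) := h ▸ mem_insert_of_mem (mem_singleton_self u)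
    simpa [hne u (mem_filter.1 hu).2] using this
  · obtain ⟨hpP, hv⟩ := mem_filter.1 hp
    obtain ⟨u, -, rfl⟩ := exists_eq_pair_of_mem_of_card_eq_two (hP p hpP) hv
    exact ⟨u, mem_filter.2 ⟨mem_univ u, hpP⟩, rfl⟩

end Degree

/-- The link of `v` in `P`, relabelled by `Fin (deg v)`, is 𝓕⁻-free, and each hyperedge of `C`
through `v` is an `(r-1)`-clique of it. -/
theorem card_filter_mem_le_mul_card_filter_mem {V : Type*} [Fintype V] [DecidableEq V]
    {ι : Type*} {m : ι → ℕ} {𝓕 : ∀ i, Finset (Finset (Fin (m i)))} (h2 : ∀ i, IsUniform 2 (𝓕 i))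
    {r : ℕ} {f : ℝ}
    (hclique : ∀ k (L : Finset (Finset (Fin k))), IsUniform 2 L →
      (∀ i a, ¬ ContainsCopy (univ.erase a) ((𝓕 i).filter (a ∉ ·)) L) →
      (countClique (r - 1) L : ℝ) ≤ f * k)
    {C P : Finset (Finset V)} (hC : IsUniform r C) (hP : IsUniform 2 P)
    (hPfree : ∀ i, ¬ ContainsCopy univ (𝓕 i) P) (hCP : ∀ h ∈ C, h.powersetCard 2 ⊆ P) (v : V) :
    (#(C.filter (v ∈ ·)) : ℝ) ≤ f * #(P.filter (v ∈ ·)) := by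
  set N := univ.filter fun u => {v, u} ∈ P
  let e : Fin #N ↪ V := N.equivFin.symm.toEmbedding.trans (Function.Embedding.subtype _)
  have he : ∀ w, {v, e w} ∈ P := fun w => (mem_filter.1 (N.equivFin.symm w).2).2
  have he' : ∀ u, {v, u} ∈ P → u ∈ Set.range e := fun u hu =>
    ⟨N.equivFin ⟨u, mem_filter.2 ⟨mem_univ u, hu⟩⟩, by simp [e]⟩
  rw [← card_filter_pair_mem_eq hP v]
  calc (#(C.filter (v ∈ ·)) : ℝ) ≤ countClique (r - 1) (pullback e P) :=
        Nat.cast_le.2 (card_filter_mem_le_countClique_pullback hC hCP he')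
    _ ≤ f * #N := hclique _ _ (hP.pullback e) fun i a hc => hPfree i (hc.of_pullback hP he (h2 i))

theorem mul_card_le_of_forall_card_filter_mem_le {V : Type*} [Fintype V] [DecidableEq V]
    {r : ℕ} {f : ℝ} {C P : Finset (Finset V)} (hC : IsUniform r C) (hP : IsUniform 2 P)
    (hv : ∀ v, (#(C.filter (v ∈ ·)) : ℝ) ≤ f * #(P.filter (v ∈ ·))) :
    r * #C ≤ 2 * f * #P := by
  have hsum : ∀ {k} {Q : Finset (Finset V)}, IsUniform k Q →
      ∑ v, (#(Q.filter (v ∈ ·)) : ℝ) = k * #Q := fun hQ => by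
    exact_mod_cast sum_card_filter_mem_of_isUniform hQ
  calc (r * #C : ℝ) = ∑ v, (#(C.filter (v ∈ ·)) : ℝ) := (hsum hC).symm
    _ ≤ ∑ v, f * #(P.filter (v ∈ ·)) := sum_le_sum fun v _ => hv v
    _ = 2 * f * #P := by rw [← mul_sum, hsum hP]; ring

theorem le_max_mul_of_card_le {r f h c p g E : ℝ} (hr : 0 < r) (hc : r * c ≤ 2 * f * p)
    (hcount : h + p ≤ g + c) (hp : 0 ≤ p) (hpg : p ≤ g) (hgE : g ≤ E) :
    h ≤ max (2 * f / r) 1 * E := by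
  rcases le_or_gt (2 * f) r with hfr | hfr
  · have : c ≤ p := le_of_mul_le_mul_left (hc.trans (mul_le_mul_of_nonneg_right hfr hp)) hr
    calc h ≤ E := by linarith
      _ ≤ _ := le_mul_of_one_le_left (by linarith) (le_max_right _ _)
  · calc h ≤ 2 * f / r * E := by
          rw [div_mul_eq_mul_div, le_div_iff₀ hr]
          nlinarith
      _ ≤ _ := mul_le_mul_of_nonneg_right (le_max_left _ _) (by linarith)

theorem exr_berge_family_le_max_mul_ex_general
    (r : ℕ) (hr : 3 ≤ r) {ι : Type} (m : ι → ℕ)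
    (𝓕 : ∀ i, Finset (Finset (Fin (m i)))) (h2 : ∀ i, IsUniform 2 (𝓕 i))
    (f : ℝ)
    (hf : ∀ N : ℕ, 0 < N →
      ((sSup {t | ∃ G : Finset (Finset (Fin N)), IsUniform 2 G ∧
          (∀ i, ∀ v : Fin (m i), ¬ ContainsCopy (Finset.univ.erase v)
            ((𝓕 i).filter fun e => v ∉ e) G) ∧
          t = countClique (r - 1) G} : ℕ) : ℝ) ≤ f * N)
    (n : ℕ) :
    (exr n r (fun H => ∀ i, ¬ ContainsBerge (𝓕 i) H) : ℝ) ≤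
      max (2 * f / r) 1 *
        (exr n 2 (fun G => ∀ i, ¬ ContainsCopy Finset.univ (𝓕 i) G) : ℝ) := by
  have hclique : ∀ k (L : Finset (Finset (Fin k))), IsUniform 2 L →
      (∀ i a, ¬ ContainsCopy (univ.erase a) ((𝓕 i).filter (a ∉ ·)) L) →
      (countClique (r - 1) L : ℝ) ≤ f * k :=
    fun _ _ hL hLfree => countClique_le_mul_of_exClique_le (by omega) hf hL hLfree
  refine exr_le_of_forall_card_le
    (mul_nonneg (zero_le_one.trans (le_max_right _ _)) (Nat.cast_nonneg _)) fun H hH hHfree => ?_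
  obtain ⟨C, hCH, G, hCG, hcard, σ, hσ, hσH⟩ := exists_matching_saturating_biUnion H (powersetCard 2)
  simp only [mem_powersetCard] at hσH
  have hGfree : ∀ i, ¬ ContainsCopy univ (𝓕 i) G := fun i hc =>
    hHfree i (hc.containsBerge hσ fun p hp => ⟨(hσH p hp).1, (hσH p hp).2.1⟩)
  have hG : #G ≤ exr n 2 (fun G => ∀ i, ¬ ContainsCopy univ (𝓕 i) G) :=
    card_le_exr (fun p hp => (hσH p hp).2.2) hGfree
  have hCr : IsUniform r C := fun h hh => hH h (hCH hh)
  have hP := isUniform_biUnion_powersetCard 2 C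
  have hC : r * #C ≤ 2 * f * #(C.biUnion (powersetCard 2)) :=
    mul_card_le_of_forall_card_filter_mem_le hCr hP <|
      card_filter_mem_le_mul_card_filter_mem h2 hclique hCr hP
        (fun i hc => hGfree i (hc.mono hCG)) fun h hh => subset_biUnion_of_mem _ hh
  exact le_max_mul_of_card_le (g := #G) (by positivity) hC (by exact_mod_cast hcard.le)
    (Nat.cast_nonneg _) (by exact_mod_cast card_le_card hCG) (by exact_mod_cast hG)

/-- Theorem: let `𝓕` be a finite family of graphs and `f ≥ 0` a real with
`ex(N, K_{r-1}, 𝓕⁻) ≤ f·N` for every positive integer `N`, where `𝓕⁻` consists of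
the graphs obtained by deleting one vertex from a member of `𝓕`.  Then
`ex_r(n, B𝓕) ≤ max{2f/r, 1} · ex(n, 𝓕)`. -/
theorem exr_berge_family_le_max_mul_ex
    (r : ℕ) (hr : 3 ≤ r) {ι : Type} [Fintype ι] (m : ι → ℕ)
    (𝓕 : ∀ i, Finset (Finset (Fin (m i)))) (h2 : ∀ i, IsUniform 2 (𝓕 i))
    (f : ℝ) (hf0 : 0 ≤ f)
    (hf : ∀ N : ℕ, 0 < N →
      ((sSup {t | ∃ G : Finset (Finset (Fin N)), IsUniform 2 G ∧
          (∀ i, ∀ v : Fin (m i), ¬ ContainsCopy (Finset.univ.erase v)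
            ((𝓕 i).filter fun e => v ∉ e) G) ∧
          t = countClique (r - 1) G} : ℕ) : ℝ) ≤ f * N)
    (n : ℕ) :
    (exr n r (fun H => ∀ i, ¬ ContainsBerge (𝓕 i) H) : ℝ) ≤
      max (2 * f / r) 1 *
        (exr n 2 (fun G => ∀ i, ¬ ContainsCopy Finset.univ (𝓕 i) G) : ℝ) :=
  exr_berge_family_le_max_mul_ex_general r hr m 𝓕 h2 f hf n
end

section
/- Let s ≥ 1 and r ≥ 2 be integers and let H be an n-vertex r-graph containing no Berge copy of M_{s+1}. Then at most s vertices of H have degree greater than s + C(2s, r−1); equivalently, if v_1, …, v_n are the vertices of H ordered so that d(v_1) ≥ d(v_2) ≥ … ≥ d(v_n), then d(v_{s+1}) ≤ s + C(2s, r−1). -/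
open Finset

/-! If `s + 1` vertices had degree greater than `s + C(2s, r-1)`, give them private edges and
private partner vertices greedily. When the centre `u` is handled, at most `s` of its edges are
already taken, and at most `C(2s, r-1)` of its edges lie inside the set `B` of all centres and
partners chosen so far, since `|B \ {u}| ≤ 2s`. So some free edge through `u` leaves `B`, and a
vertex of it outside `B` becomes the partner of `u`. The `s + 1` disjoint pairs with their edges
form a Berge copy of `M_{s+1}`. -/

open Function

variable {V : Type*} [DecidableEq V]

lemma Set.InjOn.insert_update {α β : Type*} [DecidableEq α] {f : α → β} {s : Set α} {a : α}
    {b : β} (hf : s.InjOn f) (ha : a ∉ s) (hb : b ∉ f '' s) :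
    (insert a s).InjOn (update f a b) := by
  have hs : s.EqOn (update f a b) f := fun x hx => update_of_ne (ne_of_mem_of_not_mem hx ha) _ _
  rw [Set.injOn_insert ha, hs.image_eq, update_self]
  exact ⟨hf.congr hs.symm, hb⟩

lemma card_filter_mem_subset_le_choose {r : ℕ} {H : Finset (Finset V)} (hU : IsUniform r H)
    (u : V) (B : Finset V) : #{f ∈ H | u ∈ f ∧ f ⊆ B} ≤ (#(B.erase u)).choose (r - 1) := by
  rw [← card_powersetCard]
  refine card_le_card_of_injOn (·.erase u) (fun f hf => ?_) (fun f₁ hf₁ f₂ hf₂ h => ?_)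
  · obtain ⟨hfH, hu, hfB⟩ := mem_filter.1 hf
    exact mem_powersetCard.2 ⟨erase_subset_erase u hfB, by rw [card_erase_of_mem hu, hU f hfH]⟩
  · rw [← insert_erase (mem_filter.1 hf₁).2.1, ← insert_erase (mem_filter.1 hf₂).2.1]
    exact congrArg (insert u) h

lemma exists_mem_notMem_not_subset_of_lt_card {r : ℕ} {H : Finset (Finset V)}
    (hU : IsUniform r H) {u : V} {E : Finset (Finset V)} {B : Finset V}
    (hdeg : #E + (#(B.erase u)).choose (r - 1) < #{f ∈ H | u ∈ f}) :
    ∃ f ∈ H, u ∈ f ∧ f ∉ E ∧ ∃ x ∈ f, x ∉ B := by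
  by_contra! h
  have hcover : {f ∈ H | u ∈ f} ⊆ E ∪ {f ∈ H | u ∈ f ∧ f ⊆ B} := by
    intro f hf
    obtain ⟨hfH, hu⟩ := mem_filter.1 hf
    by_cases hfE : f ∈ E
    · exact mem_union_left _ hfE
    · exact mem_union_right _ (mem_filter.2 ⟨hfH, hu, h f hfH hu hfE⟩)
  have := (card_le_card hcover).trans (card_union_le _ _)
  have := card_filter_mem_subset_le_choose hU u B
  omega

def matchingEdge (t : ℕ) (i : Fin t) : Finset (Fin t × Fin 2) := {(i, 0), (i, 1)}

lemma matchingHG_eq_image_matchingEdge (t : ℕ) : matchingHG t = univ.image (matchingEdge t) :=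
  rfl

lemma matchingEdge_injective (t : ℕ) : Injective (matchingEdge t) := by
  intro i j h
  have : (i, 0) ∈ matchingEdge t j := h ▸ mem_insert_self _ _
  simpa [matchingEdge] using this

lemma containsBerge_matchingHG {t : ℕ} {H : Finset (Finset V)} {v w : Fin t → V}
    {e : Fin t → Finset V} (hv : Injective v) (hw : Injective w) (hvw : ∀ i j, v i ≠ w j)
    (he : Injective e) (heH : ∀ i, e i ∈ H) (hve : ∀ i, v i ∈ e i) (hwe : ∀ i, w i ∈ e i) :
    ContainsBerge (matchingHG t) H := by
  have hpair := matchingEdge_injective t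
  rw [matchingHG_eq_image_matchingEdge]
  refine ⟨fun p => ![v p.1, w p.1] p.2, extend (matchingEdge t) e fun _ => ∅, ?_, ?_, ?_, ?_⟩
  · rintro ⟨i, a⟩ ⟨j, b⟩ h
    fin_cases a <;> fin_cases b <;>
      simp only [Fin.zero_eta, Fin.mk_one, Matrix.cons_val_zero, Matrix.cons_val_one,
        Matrix.cons_val_fin_one] at h
    · rw [hv h]
    · exact absurd h (hvw i j)
    · exact absurd h.symm (hvw j i)
    · rw [hw h]
  · simp only [coe_image, coe_univ, Set.image_univ]
    rintro _ ⟨i, rfl⟩ _ ⟨j, rfl⟩ h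
    rw [hpair.extend_apply, hpair.extend_apply] at h
    rw [he h]
  · simp only [forall_mem_image, mem_univ, forall_const, hpair.extend_apply]
    exact heH
  · simp only [forall_mem_image, mem_univ, forall_const, hpair.extend_apply]
    intro i
    simp [matchingEdge, insert_subset_iff, hve i, hwe i]

lemma exists_injOn_edges_of_lt_card {r t : ℕ} {H : Finset (Finset V)} (hU : IsUniform r H)
    {T : Finset V} (hT : #T = t + 1)
    (hdeg : ∀ u ∈ T, t + (2 * t).choose (r - 1) < #{f ∈ H | u ∈ f}) :
    ∃ (e : V → Finset V) (w : V → V), Set.InjOn e T ∧ Set.InjOn w T ∧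
      ∀ u ∈ T, e u ∈ H ∧ u ∈ e u ∧ w u ∈ e u ∧ w u ∉ T := by
  suffices ∀ S ⊆ T, ∃ (e : V → Finset V) (w : V → V), Set.InjOn e S ∧ Set.InjOn w S ∧
      ∀ u ∈ S, e u ∈ H ∧ u ∈ e u ∧ w u ∈ e u ∧ w u ∉ T from this T subset_rfl
  intro S
  induction S using Finset.induction_on with
  | empty => exact fun _ => ⟨fun _ => ∅, id, by simp, by simp, by simp⟩
  | insert u S hu ih =>
    intro hST
    obtain ⟨e, w, he, hw, hS⟩ := ih ((subset_insert u S).trans hST)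
    have huT : u ∈ T := hST (mem_insert_self u S)
    have hScard : #S ≤ t := by
      have := card_le_card hST
      rw [card_insert_of_notMem hu] at this
      omega
    have hBcard : #((T ∪ S.image w).erase u) ≤ 2 * t := by
      have := card_union_le T (S.image w)
      have := card_image_le (s := S) (f := w)
      rw [card_erase_of_mem (mem_union_left _ huT)]
      omega
    have hEcard : #(S.image e) ≤ t := card_image_le.trans hScard
    obtain ⟨f, hfH, huf, hfE, x, hxf, hxB⟩ := exists_mem_notMem_not_subset_of_lt_card hU
      (E := S.image e) (B := T ∪ S.image w)
      ((add_le_add hEcard (Nat.choose_le_choose _ hBcard)).trans_lt (hdeg u huT))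
    refine ⟨update e u f, update w u x, ?_, ?_, ?_⟩
    · rw [coe_insert]
      exact he.insert_update (mem_coe.not.2 hu) (by simpa using hfE)
    · rw [coe_insert]
      exact hw.insert_update (mem_coe.not.2 hu) (fun h => hxB (by simpa using Or.inr h))
    · intro y hy
      rcases mem_insert.1 hy with rfl | hyS
      · simp only [update_self]
        exact ⟨hfH, huf, hxf, fun h => hxB (mem_union_left _ h)⟩
      · have hyu : y ≠ u := ne_of_mem_of_not_mem hyS hu
        rw [update_of_ne hyu, update_of_ne hyu]
        exact hS y hyS

lemma containsBerge_matchingHG_of_injOn {H : Finset (Finset V)} {T : Finset V}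
    {e : V → Finset V} {w : V → V} (he : Set.InjOn e T) (hw : Set.InjOn w T)
    (h : ∀ u ∈ T, e u ∈ H ∧ u ∈ e u ∧ w u ∈ e u ∧ w u ∉ T) :
    ContainsBerge (matchingHG #T) H := by
  set σ : Fin #T → V := fun i => T.equivFin.symm i
  have hσT (i : Fin #T) : σ i ∈ T := (T.equivFin.symm i).2
  have hσ : Injective σ := Subtype.val_injective.comp T.equivFin.symm.injective
  refine containsBerge_matchingHG (v := σ) (w := w ∘ σ) (e := e ∘ σ) hσ
    (fun i j hij => hσ (hw (hσT i) (hσT j) hij))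
    (fun i j hij => (h _ (hσT j)).2.2.2 (Eq.subst (motive := (· ∈ T)) hij (hσT i)))
    (fun i j hij => hσ (he (hσT i) (hσT j) hij)) (fun i => (h _ (hσT i)).1)
    (fun i => (h _ (hσT i)).2.1) (fun i => (h _ (hσT i)).2.2.1)

theorem berge_matching_free_few_large_degrees_general
    (s r n : ℕ)
    (H : Finset (Finset (Fin n))) (hU : IsUniform r H)
    (hfree : ¬ ContainsBerge (matchingHG (s + 1)) H) :
    (Finset.univ.filter fun v : Fin n =>
        s + Nat.choose (2 * s) (r - 1) < (H.filter fun e => v ∈ e).card).card ≤ s := by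
  by_contra! hlarge
  obtain ⟨T, hTlarge, hT⟩ := exists_subset_card_eq (n := s + 1) hlarge
  obtain ⟨e, w, he, hw, h⟩ :=
    exists_injOn_edges_of_lt_card hU hT fun u hu => (mem_filter.1 (hTlarge hu)).2
  exact hfree (hT ▸ containsBerge_matchingHG_of_injOn he hw h)

/-- Claim: if `H` is an `n`-vertex `r`-graph with no Berge copy of `M_{s+1}`, then at
most `s` vertices of `H` have degree greater than `s + C(2s, r-1)`. -/
theorem berge_matching_free_few_large_degrees
    (s r n : ℕ) (hs : 1 ≤ s) (hr : 2 ≤ r)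
    (H : Finset (Finset (Fin n))) (hU : IsUniform r H)
    (hfree : ¬ ContainsBerge (matchingHG (s + 1)) H) :
    (Finset.univ.filter fun v : Fin n =>
        s + Nat.choose (2 * s) (r - 1) < (H.filter fun e => v ∈ e).card).card ≤ s :=
  berge_matching_free_few_large_degrees_general s r n H hU hfree
end

section
/- Let s ≥ 2 and r be integers with 3 ≤ r ≤ s+1. Then there exists n₀ such that for all n ≥ n₀, every n-vertex r-graph containing no Berge copy of M_{s+1} has maximum degree at most C(s−1, r−2)·(n−1) + C(s−1, r−1). -/
open Finset

/-!
A Berge copy of `M_s` in the link of `v` (an `(r-1)`-graph on the other `n-1` vertices),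
together with a further hyperedge of the link that is neither one of its `s` hyperedges nor
contained in its `2s` vertices, lifts to a Berge copy of `M_{s+1}` in `H`: add `v` to every
hyperedge and match `v` with a vertex of the further one outside those `2s`. Once the degree of
`v` exceeds `s + C(2s, r-1)` such a hyperedge exists, so the link has no Berge `M_s`, and its
size is bounded by `ex_{k+1}(N, Berge-M_{m+1}) ≤ C(m,k) N + C(m,k+1)` (`k ≤ m`, `N` large).

This bound is proved by induction on `m`. The support of a maximal Berge matching has at most
`2m` vertices and meets every hyperedge, so some vertex lies in a `1/(2m)` fraction of them. If
its degree is large, the lifting argument shows that neither the hyperedges avoiding it nor its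
link contain a Berge `M_m`, and Pascal's rule adds up the two inductive bounds; the same
reduction bounds the number of hyperedges by a constant when `m < k`. For `k = m` a finer count
is needed: either every `m`-set lies in at most `m + 1` hyperedges, which bounds their number
around a Berge `M_m`, or some `m`-set `K` lies in more, and then in all of them, so that every
hyperedge is `insert y K` for a vertex `y`.
-/

universe u

variable {V : Type u}

lemma IsUniform.mono {c : ℕ} {L L' : Finset (Finset V)} (hL : IsUniform c L) (h : L' ⊆ L) :
    IsUniform c L' :=
  fun B hB => hL B (h hB)

lemma card_le_choose_of_isUniform {c : ℕ} {L : Finset (Finset V)} {X : Finset V}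
    (hX : L ⊆ X.powerset) (hL : IsUniform c L) : L.card ≤ X.card.choose c := by
  rw [← card_powersetCard]
  exact card_le_card fun B hB => mem_powersetCard.2 ⟨mem_powerset.1 (hX hB), hL B hB⟩

/-- A Berge copy of the matching `M_m` in `L`: the `i`-th matching edge `{left i, right i}`
is carried by the hyperedge `edge i`. -/
structure BergeMatching (L : Finset (Finset V)) (m : ℕ) where
  edge : Fin m → Finset V
  left : Fin m → V
  right : Fin m → V
  edge_injective : Function.Injective edge
  left_injective : Function.Injective left
  right_injective : Function.Injective right
  left_ne_right : ∀ i j, left i ≠ right j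
  edge_mem : ∀ i, edge i ∈ L
  left_mem : ∀ i, left i ∈ edge i
  right_mem : ∀ i, right i ∈ edge i

def HasBergeMatching (L : Finset (Finset V)) (m : ℕ) : Prop :=
  Nonempty (BergeMatching L m)

lemma hasBergeMatching_zero (L : Finset (Finset V)) : HasBergeMatching L 0 := by
  refine ⟨⟨Fin.elim0, Fin.elim0, Fin.elim0, ?_, ?_, ?_, ?_, ?_, ?_, ?_⟩⟩ <;>
    exact fun i => i.elim0

lemma exists_hasBergeMatching_not_hasBergeMatching_succ {L : Finset (Finset V)} {m : ℕ}
    (hM : ¬ HasBergeMatching L (m + 1)) :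
    ∃ t ≤ m, HasBergeMatching L t ∧ ¬ HasBergeMatching L (t + 1) := by
  classical
  set t := Nat.findGreatest (HasBergeMatching L) (m + 1)
  have ht : HasBergeMatching L t :=
    Nat.findGreatest_spec (Nat.zero_le _) (hasBergeMatching_zero L)
  have htm : t ≤ m := by
    rcases (Nat.findGreatest_le (P := HasBergeMatching L) (m + 1)).lt_or_eq with h | h
    · omega
    · exact absurd (h ▸ ht) hM
  exact ⟨t, htm, ht, Nat.findGreatest_is_greatest (Nat.lt_succ_self t) (by omega)⟩

variable [DecidableEq V]

section Counting

variable {c : ℕ} {L : Finset (Finset V)}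

lemma card_le_card_add_choose_add_card_filter (hL : IsUniform c L) (S : Finset (Finset V))
    (W : Finset V) : L.card ≤ S.card + W.card.choose c + {B ∈ L | B ∉ S ∧ ¬ B ⊆ W}.card := by
  have hsub : L ⊆ S ∪ W.powersetCard c ∪ {B ∈ L | B ∉ S ∧ ¬ B ⊆ W} := by
    intro B hB
    by_cases hS : B ∈ S
    · simp [hS]
    by_cases hW : B ⊆ W
    · simp [hW, hL B hB]
    · simp [hB, hS, hW]
  refine (card_le_card hsub).trans ((card_union_le _ _).trans (Nat.add_le_add_right ?_ _))
  exact (card_union_le _ _).trans_eq (by rw [card_powersetCard])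

lemma exists_mem_notMem_not_subset (hL : IsUniform c L) (S : Finset (Finset V)) (W : Finset V)
    (h : S.card + W.card.choose c < L.card) : ∃ B ∈ L, B ∉ S ∧ ¬ B ⊆ W := by
  have := card_le_card_add_choose_add_card_filter hL S W
  obtain ⟨B, hB⟩ := card_pos.1 (show 0 < {B ∈ L | B ∉ S ∧ ¬ B ⊆ W}.card by omega)
  exact ⟨B, (mem_filter.1 hB).1, (mem_filter.1 hB).2⟩

lemma card_filter_superset_le {X K : Finset V} (hX : L ⊆ X.powerset)
    (hL : IsUniform (K.card + 1) L) :
    {B ∈ L | K ⊆ B}.card ≤ {y ∈ X \ K | insert y K ∈ L}.card := by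
  refine (card_le_card fun B hB => ?_).trans (card_image_le (f := fun y => insert y K))
  obtain ⟨hBL, hKB⟩ := mem_filter.1 hB
  obtain ⟨y, hyK, rfl⟩ := exists_eq_insert_iff.2 ⟨hKB, (hL B hBL).symm⟩
  refine mem_image.2 ⟨y, mem_filter.2 ⟨mem_sdiff.2 ⟨?_, hyK⟩, hBL⟩, rfl⟩
  exact mem_powerset.1 (hX hBL) (mem_insert_self y K)

end Counting

def link (L : Finset (Finset V)) (x : V) : Finset (Finset V) :=
  {B ∈ L | x ∈ B}.image (·.erase x)

section Link

variable {k : ℕ} {L : Finset (Finset V)} {x : V}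

lemma mem_link {B : Finset V} : B ∈ link L x ↔ x ∉ B ∧ insert x B ∈ L := by
  constructor
  · intro h
    obtain ⟨A, hA, rfl⟩ := mem_image.1 h
    rw [mem_filter] at hA
    exact ⟨notMem_erase x A, by rw [insert_erase hA.2]; exact hA.1⟩
  · rintro ⟨hxB, hB⟩
    exact mem_image.2 ⟨insert x B, mem_filter.2 ⟨hB, mem_insert_self x B⟩, erase_insert hxB⟩

lemma card_link : (link L x).card = {B ∈ L | x ∈ B}.card :=
  card_image_of_injOn fun A hA B hB h => by
    rw [← insert_erase (mem_filter.1 hA).2, ← insert_erase (mem_filter.1 hB).2]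
    exact congrArg (insert x) h

lemma card_filter_notMem_add_card_link : {B ∈ L | x ∉ B}.card + (link L x).card = L.card := by
  rw [card_link, add_comm]
  exact card_filter_add_card_filter_not _

lemma IsUniform.link (hL : IsUniform (k + 1) L) (x : V) : IsUniform k (link L x) := by
  intro B hB
  have := hL _ (mem_link.1 hB).2
  rw [card_insert_of_notMem (mem_link.1 hB).1] at this
  omega

lemma link_subset_powerset_erase {X : Finset V} (hX : L ⊆ X.powerset) (x : V) :
    link L x ⊆ (X.erase x).powerset := by
  intro B hB
  have hBX := mem_powerset.1 (hX (mem_link.1 hB).2)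
  exact mem_powerset.2 fun y hy =>
    mem_erase.2 ⟨fun h => (mem_link.1 hB).1 (h ▸ hy), hBX (mem_insert_of_mem hy)⟩

lemma card_le_sum_card_link {W : Finset V} (hW : ∀ B ∈ L, ∃ w ∈ W, w ∈ B) :
    L.card ≤ ∑ w ∈ W, (link L w).card := by
  have hsub : L ⊆ W.biUnion fun w => {B ∈ L | w ∈ B} := fun B hB => by
    obtain ⟨w, hw, hwB⟩ := hW B hB
    exact mem_biUnion.2 ⟨w, hw, mem_filter.2 ⟨hB, hwB⟩⟩
  simpa only [card_link] using (card_le_card hsub).trans card_biUnion_le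

end Link

namespace BergeMatching

variable {L L' : Finset (Finset V)} {m : ℕ}

def edges (M : BergeMatching L m) : Finset (Finset V) :=
  univ.image M.edge

def support (M : BergeMatching L m) : Finset V :=
  univ.image M.left ∪ univ.image M.right

@[simp]
lemma mem_edges (M : BergeMatching L m) {B : Finset V} : B ∈ M.edges ↔ ∃ i, M.edge i = B := by
  simp [edges]

@[simp]
lemma mem_support (M : BergeMatching L m) {x : V} :
    x ∈ M.support ↔ (∃ i, M.left i = x) ∨ ∃ i, M.right i = x := by
  simp [support]

lemma card_edges_le (M : BergeMatching L m) : M.edges.card ≤ m :=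
  card_image_le.trans_eq (card_fin m)

lemma card_support_le (M : BergeMatching L m) : M.support.card ≤ 2 * m :=
  (card_union_le _ _).trans <| by
    simpa [two_mul] using add_le_add (card_image_le (s := univ) (f := M.left))
      (card_image_le (s := univ) (f := M.right))

lemma notMem_support_of_forall_notMem_edge (M : BergeMatching L m) {x : V}
    (hx : ∀ i, x ∉ M.edge i) : x ∉ M.support := by
  simp only [mem_support, not_or, not_exists]
  exact ⟨fun i h => hx i (h ▸ M.left_mem i), fun i h => hx i (h ▸ M.right_mem i)⟩

def mono (M : BergeMatching L m) (h : L ⊆ L') : BergeMatching L' m :=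
  { M with edge_mem := fun i => h (M.edge_mem i) }

def cons (M : BergeMatching L m) {B : Finset V} {u v : V} (hB : B ∈ L) (hBM : B ∉ M.edges)
    (hu : u ∈ B) (hv : v ∈ B) (huv : u ≠ v) (huM : u ∉ M.support) (hvM : v ∉ M.support) :
    BergeMatching L (m + 1) where
  edge := Fin.cons B M.edge
  left := Fin.cons u M.left
  right := Fin.cons v M.right
  edge_injective := Fin.cons_injective_iff.2 ⟨by simpa using hBM, M.edge_injective⟩
  left_injective := Fin.cons_injective_iff.2 ⟨by simp_all, M.left_injective⟩
  right_injective := Fin.cons_injective_iff.2 ⟨by simp_all, M.right_injective⟩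
  left_ne_right := by
    simp only [Fin.forall_fin_succ, Fin.cons_zero, Fin.cons_succ]
    simp_all [M.left_ne_right, eq_comm]
  edge_mem := by simp [Fin.forall_fin_succ, hB, M.edge_mem]
  left_mem := by simp [Fin.forall_fin_succ, hu, M.left_mem]
  right_mem := by simp [Fin.forall_fin_succ, hv, M.right_mem]

def liftLink {x : V} (M : BergeMatching (link L x) m) : BergeMatching L m where
  edge i := insert x (M.edge i)
  left := M.left
  right := M.right
  edge_injective i j h := M.edge_injective <| by
    rw [← erase_insert (mem_link.1 (M.edge_mem i)).1,
      ← erase_insert (mem_link.1 (M.edge_mem j)).1]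
    exact congrArg (·.erase x) h
  left_injective := M.left_injective
  right_injective := M.right_injective
  left_ne_right := M.left_ne_right
  edge_mem i := (mem_link.1 (M.edge_mem i)).2
  left_mem i := mem_insert_of_mem (M.left_mem i)
  right_mem i := mem_insert_of_mem (M.right_mem i)

noncomputable def sunflower {K Z : Finset V} (hKZ : Disjoint K Z) (hcard : Z.card = K.card)
    (hZ : ∀ z ∈ Z, insert z K ∈ L) : BergeMatching L K.card where
  edge i := insert ((Z.equivFinOfCardEq hcard).symm i : V) K
  left i := K.equivFin.symm i
  right i := (Z.equivFinOfCardEq hcard).symm i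
  edge_injective i j h := by
    have hi := disjoint_right.1 hKZ ((Z.equivFinOfCardEq hcard).symm i).2
    rw [insert_inj hi] at h
    exact (Z.equivFinOfCardEq hcard).symm.injective (Subtype.ext h)
  left_injective i j h := K.equivFin.symm.injective (Subtype.ext h)
  right_injective i j h := (Z.equivFinOfCardEq hcard).symm.injective (Subtype.ext h)
  left_ne_right i j h :=
    disjoint_left.1 hKZ (K.equivFin.symm i).2 (h ▸ ((Z.equivFinOfCardEq hcard).symm j).2)
  edge_mem i := hZ _ ((Z.equivFinOfCardEq hcard).symm i).2
  left_mem i := mem_insert_of_mem (K.equivFin.symm i).2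
  right_mem i := mem_insert_self _ _

lemma containsBerge (M : BergeMatching L m) : ContainsBerge (matchingHG m) L := by
  set pair : Fin m → Finset (Fin m × Fin 2) := fun i => {(i, 0), (i, 1)}
  have hpair : Function.Injective pair := fun i j h => by
    simpa [pair] using (show ((i, 0) : Fin m × Fin 2) ∈ pair j from h ▸ by simp [pair])
  have hφ : ∀ i, Function.extend pair M.edge (fun _ => ∅) {(i, 0), (i, 1)} = M.edge i :=
    hpair.extend_apply _ _
  refine ⟨fun p => if p.2 = 0 then M.left p.1 else M.right p.1,
    Function.extend pair M.edge fun _ => ∅, ?_, ?_, ?_, ?_⟩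
  · rintro ⟨i, a⟩ ⟨j, b⟩ h
    fin_cases a <;> fin_cases b <;> simp at h
    · rw [M.left_injective h]
    · exact absurd h (M.left_ne_right i j)
    · exact absurd h.symm (M.left_ne_right j i)
    · rw [M.right_injective h]
  all_goals simp only [matchingHG, coe_image, coe_univ, Set.image_univ, Set.InjOn,
    Set.forall_mem_range, mem_image, mem_univ, true_and, forall_exists_index,
    forall_apply_eq_imp_iff, hφ]
  · exact fun i j h => by rw [M.edge_injective h]
  · exact M.edge_mem
  · simp [insert_subset_iff, M.left_mem, M.right_mem]

lemma card_sdiff_support_le_one (M : BergeMatching L m) (hM : ¬ HasBergeMatching L (m + 1))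
    {B : Finset V} (hB : B ∈ L) (hBM : B ∉ M.edges) : (B \ M.support).card ≤ 1 := by
  by_contra! h
  obtain ⟨u, hu, v, hv, huv⟩ := one_lt_card.1 h
  rw [mem_sdiff] at hu hv
  exact hM ⟨M.cons hB hBM hu.1 hv.1 huv hu.2 hv.2⟩

lemma exists_mem_notMem_edges_not_subset_support {c : ℕ} (M : BergeMatching L' m)
    (hL : IsUniform c L) (h : m + (2 * m).choose c < L.card) :
    ∃ B ∈ L, B ∉ M.edges ∧ ¬ B ⊆ M.support :=
  exists_mem_notMem_not_subset hL _ _ <|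
    (add_le_add M.card_edges_le (Nat.choose_le_choose c M.card_support_le)).trans_lt h

lemma hasBergeMatching_succ_of_link {x y : V} {B : Finset V} (M : BergeMatching (link L x) m)
    (hB : B ∈ link L x) (hBM : B ∉ M.edges) (hyB : y ∈ B) (hyM : y ∉ M.support) :
    HasBergeMatching L (m + 1) := by
  have hxE : ∀ i, x ∉ M.edge i := fun i => (mem_link.1 (M.edge_mem i)).1
  refine ⟨M.liftLink.cons (mem_link.1 hB).2 ?_ (mem_insert_self x B) (mem_insert_of_mem hyB)
    (fun h => (mem_link.1 hB).1 (h ▸ hyB)) (M.notMem_support_of_forall_notMem_edge hxE) hyM⟩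
  simp only [mem_edges, not_exists] at hBM ⊢
  intro i h
  apply hBM i
  rw [← erase_insert (hxE i), ← erase_insert (mem_link.1 hB).1]
  exact congrArg (·.erase x) h

/-- A hyperedge outside a maximal Berge matching of size `m` in an `(m+1)`-graph meets its
support in exactly `m` vertices; count these hyperedges by their trace on the support. -/
lemma card_filter_le_choose_mul (M : BergeMatching L m) (hM : ¬ HasBergeMatching L (m + 1))
    (hL : IsUniform (m + 1) L) (n : ℕ)
    (hn : ∀ K : Finset V, K.card = m → {B ∈ L | K ⊆ B}.card ≤ n) :
    {B ∈ L | B ∉ M.edges ∧ ¬ B ⊆ M.support}.card ≤ (2 * m).choose m * n := by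
  set P := {B ∈ L | B ∉ M.edges ∧ ¬ B ⊆ M.support}
  have hmaps : ∀ B ∈ P, B ∩ M.support ∈ M.support.powersetCard m := by
    intro B hB
    obtain ⟨hBL, hBM, hBW⟩ := mem_filter.1 hB
    have h₁ := M.card_sdiff_support_le_one hM hBL hBM
    have h₂ : 0 < (B \ M.support).card := card_pos.2 (sdiff_nonempty.2 hBW)
    have h₃ := card_sdiff_add_card_inter B M.support
    rw [hL B hBL] at h₃
    exact mem_powersetCard.2 ⟨inter_subset_right, by omega⟩
  calc P.card ≤ n * (P.image (· ∩ M.support)).card := by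
        refine card_le_mul_card_image P n fun K hK => (card_le_card fun B hB => ?_).trans
          (hn K (mem_powersetCard.1 (image_subset_iff.2 hmaps hK)).2)
        obtain ⟨hBP, rfl⟩ := mem_filter.1 hB
        exact mem_filter.2 ⟨(mem_filter.1 hBP).1, inter_subset_left⟩
    _ ≤ n * (M.support.powersetCard m).card := by gcongr; exact image_subset_iff.2 hmaps
    _ ≤ (2 * m).choose m * n := by
        rw [card_powersetCard, mul_comm]
        exact Nat.mul_le_mul_right n (Nat.choose_le_choose m M.card_support_le)

end BergeMatching

section Reduction

variable {c k m : ℕ} {L : Finset (Finset V)}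

/-- The support of a maximal Berge matching meets every hyperedge with at least two vertices. -/
lemma exists_cover_card_le (hc : 2 ≤ c) (hL : IsUniform c L)
    (hM : ¬ HasBergeMatching L (m + 1)) :
    ∃ W : Finset V, W.card ≤ 2 * m ∧ ∀ B ∈ L, ∃ w ∈ W, w ∈ B := by
  obtain ⟨t, htm, ⟨M⟩, hmax⟩ := exists_hasBergeMatching_not_hasBergeMatching_succ hM
  refine ⟨M.support, M.card_support_le.trans (by omega), fun B hB => ?_⟩
  by_cases hBM : B ∈ M.edges
  · obtain ⟨i, rfl⟩ := M.mem_edges.1 hBM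
    exact ⟨M.left i, M.mem_support.2 (.inl ⟨i, rfl⟩), M.left_mem i⟩
  · by_contra! hdisj
    have h := M.card_sdiff_support_le_one hmax hB hBM
    rw [sdiff_eq_self_of_disjoint (disjoint_right.2 hdisj), hL B hB] at h
    omega

lemma card_le_or_exists_le_card_link (hc : 2 ≤ c) (hL : IsUniform c L)
    (hM : ¬ HasBergeMatching L (m + 1)) (D : ℕ) :
    L.card ≤ 2 * m * D ∨ ∃ x, D ≤ (link L x).card := by
  obtain ⟨W, hWm, hW⟩ := exists_cover_card_le hc hL hM
  by_cases h : ∃ x ∈ W, D ≤ (link L x).card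
  · obtain ⟨x, -, hx⟩ := h
    exact .inr ⟨x, hx⟩
  push Not at h
  refine .inl ?_
  calc L.card ≤ ∑ w ∈ W, (link L w).card := card_le_sum_card_link hW
    _ ≤ W.card * D := by simpa using sum_le_card_nsmul W _ D fun w hw => (h w hw).le
    _ ≤ 2 * m * D := Nat.mul_le_mul_right D hWm

lemma not_hasBergeMatching_link (hL : IsUniform (k + 1) L) (hM : ¬ HasBergeMatching L (m + 1))
    {x : V} (hx : m + (2 * m).choose k < (link L x).card) :
    ¬ HasBergeMatching (link L x) m := by
  rintro ⟨M⟩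
  obtain ⟨B, hB, hBM, hBW⟩ := M.exists_mem_notMem_edges_not_subset_support (hL.link x) hx
  obtain ⟨y, hyB, hyM⟩ := not_subset.1 hBW
  exact hM (M.hasBergeMatching_succ_of_link hB hBM hyB hyM)

lemma not_hasBergeMatching_filter_notMem (hL : IsUniform (k + 1) L)
    (hM : ¬ HasBergeMatching L (m + 1)) {x : V} (hx : m + (2 * m).choose k < (link L x).card) :
    ¬ HasBergeMatching {B ∈ L | x ∉ B} m := by
  rintro ⟨M⟩
  obtain ⟨B, hB, -, hBW⟩ := M.exists_mem_notMem_edges_not_subset_support (hL.link x) hx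
  obtain ⟨y, hyB, hyM⟩ := not_subset.1 hBW
  have hxE : ∀ i, x ∉ M.edge i := fun i => (mem_filter.1 (M.edge_mem i)).2
  set M' := M.mono (filter_subset _ L)
  refine hM ⟨M'.cons (mem_link.1 hB).2 ?_ (mem_insert_self x B) (mem_insert_of_mem hyB)
    (fun h => (mem_link.1 hB).1 (h ▸ hyB)) (M'.notMem_support_of_forall_notMem_edge hxE) hyM⟩
  intro hmem
  obtain ⟨i, hi⟩ := M'.mem_edges.1 hmem
  exact hxE i (hi ▸ mem_insert_self x B)

/-- A hyperedge `B ⊉ K` has two vertices `u, v` outside `K`; with `|K|` petals `insert y K`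
avoiding `u, v` it would form a Berge copy of `M_{|K|+1}`. -/
lemma subset_of_not_hasBergeMatching {K Y : Finset V} (hL : IsUniform (K.card + 1) L)
    (hM : ¬ HasBergeMatching L (K.card + 1)) (hKY : Disjoint K Y) (hY : ∀ y ∈ Y, insert y K ∈ L)
    (hYcard : K.card + 2 ≤ Y.card) {B : Finset V} (hB : B ∈ L) : K ⊆ B := by
  by_contra hKB
  have hBK : 1 < (B \ K).card := by
    have h₁ := card_sdiff_add_card_inter B K
    have h₂ : (B ∩ K).card < K.card :=
      card_lt_card ⟨inter_subset_right, fun h => hKB (h.trans inter_subset_left)⟩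
    rw [hL B hB] at h₁
    omega
  obtain ⟨u, hu, v, hv, huv⟩ := one_lt_card.1 hBK
  rw [mem_sdiff] at hu hv
  obtain ⟨Z, hZuv, hZ⟩ := exists_subset_card_eq (s := (Y.erase u).erase v) (n := K.card) <| by
    have := pred_card_le_card_erase (s := Y) (a := u)
    have := pred_card_le_card_erase (s := Y.erase u) (a := v)
    omega
  have hZY : Z ⊆ Y := hZuv.trans ((erase_subset _ _).trans (erase_subset _ _))
  have huZ : u ∉ Z := fun h => by simpa using hZuv h
  have hvZ : v ∉ Z := fun h => by simpa using hZuv h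
  let S := BergeMatching.sunflower (L := L) (hKY.mono_right hZY) hZ fun z hz => hY z (hZY hz)
  refine hM ⟨S.cons hB ?_ hu.1 hv.1 huv ?_ ?_⟩
  · intro hBS
    obtain ⟨i, rfl⟩ := S.mem_edges.1 hBS
    exact hKB (subset_insert _ _)
  all_goals simp only [S, BergeMatching.mem_support, BergeMatching.sunflower, not_or, not_exists]
  · exact ⟨fun i h => hu.2 (h ▸ (K.equivFin.symm i).2),
      fun i h => huZ (h ▸ ((Z.equivFinOfCardEq hZ).symm i).2)⟩
  · exact ⟨fun i h => hv.2 (h ▸ (K.equivFin.symm i).2),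
      fun i h => hvZ (h ▸ ((Z.equivFinOfCardEq hZ).symm i).2)⟩

end Reduction

theorem exists_card_le_of_not_hasBergeMatching_of_lt :
    ∀ m k : ℕ, m < k → ∃ C : ℕ, ∀ (V : Type u) [DecidableEq V] (L : Finset (Finset V)),
      IsUniform k L → ¬ HasBergeMatching L m → L.card ≤ C
  | 0, _, _ => ⟨0, fun _ _ L _ hM => (hM (hasBergeMatching_zero L)).elim⟩
  | _ + 1, 0, h => absurd h (Nat.not_lt_zero _)
  | m + 1, k + 1, hmk => by
    obtain ⟨C₁, h₁⟩ := exists_card_le_of_not_hasBergeMatching_of_lt m (k + 1) (by omega)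
    obtain ⟨C₂, h₂⟩ := exists_card_le_of_not_hasBergeMatching_of_lt m k (by omega)
    set D := m + (2 * m).choose k + 1
    refine ⟨max (2 * m * D) (C₁ + C₂), fun V _ L hL hM => ?_⟩
    rcases card_le_or_exists_le_card_link (by omega) hL hM D with hsmall | ⟨x, hx⟩
    · exact le_max_of_le_left hsmall
    rw [← card_filter_notMem_add_card_link (x := x)]
    exact le_max_of_le_right (add_le_add
      (h₁ V _ (hL.mono (filter_subset _ _)) (not_hasBergeMatching_filter_notMem hL hM hx))
      (h₂ V _ (hL.link x) (not_hasBergeMatching_link hL hM hx)))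

theorem exists_card_le_card_of_not_hasBergeMatching_self (m : ℕ) :
    ∃ N : ℕ, ∀ (V : Type u) [DecidableEq V] (X : Finset V) (L : Finset (Finset V)),
      L ⊆ X.powerset → IsUniform (m + 1) L → ¬ HasBergeMatching L (m + 1) → N ≤ X.card →
        L.card ≤ X.card := by
  obtain ⟨C, hC⟩ := exists_card_le_of_not_hasBergeMatching_of_lt m (m + 1) m.lt_succ_self
  refine ⟨C + m + (2 * m).choose (m + 1) + (2 * m).choose m * (m + 1) + 1,
    fun V _ X L hX hL hM hN => ?_⟩
  by_contra! hXL
  obtain ⟨M⟩ : HasBergeMatching L m := by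
    by_contra h
    have := hC V L hL h
    omega
  by_cases hfew : ∀ K : Finset V, K.card = m → {B ∈ L | K ⊆ B}.card ≤ m + 1
  · have h₁ := card_le_card_add_choose_add_card_filter hL M.edges M.support
    have h₂ := M.card_filter_le_choose_mul hM hL _ hfew
    have h₃ := M.card_edges_le
    have h₄ := Nat.choose_le_choose (m + 1) M.card_support_le
    omega
  push Not at hfew
  obtain ⟨K, rfl, hK⟩ := hfew
  have hY := card_filter_superset_le hX hL
  have hall : ∀ B ∈ L, K ⊆ B := fun B hB =>
    subset_of_not_hasBergeMatching (Y := {y ∈ X \ K | insert y K ∈ L}) hL hM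
      (disjoint_left.2 fun y hyK hy => (mem_sdiff.1 (mem_filter.1 hy).1).2 hyK)
      (fun y hy => (mem_filter.1 hy).2) (by omega) hB
  rw [filter_true_of_mem hall] at hY
  exact hXL.not_ge (hY.trans ((card_filter_le _ _).trans (card_le_card sdiff_subset)))

theorem exists_card_le_choose_mul_add_choose_of_not_hasBergeMatching :
    ∀ m k : ℕ, k ≤ m → ∃ N : ℕ, ∀ (V : Type u) [DecidableEq V] (X : Finset V)
      (L : Finset (Finset V)), L ⊆ X.powerset → IsUniform (k + 1) L →
        ¬ HasBergeMatching L (m + 1) → N ≤ X.card →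
          L.card ≤ m.choose k * X.card + m.choose (k + 1)
  | m, 0, _ => ⟨0, fun _ _ X L hX hL _ _ =>
      (card_le_choose_of_isUniform hX hL).trans (by simp)⟩
  | 0, _ + 1, h => absurd h (by omega)
  | m + 1, k + 1, hkm => by
    by_cases hkm' : k = m
    · subst hkm'
      simpa using exists_card_le_card_of_not_hasBergeMatching_self (k + 1)
    obtain ⟨N₁, h₁⟩ :=
      exists_card_le_choose_mul_add_choose_of_not_hasBergeMatching m (k + 1) (by omega)
    obtain ⟨N₂, h₂⟩ := exists_card_le_choose_mul_add_choose_of_not_hasBergeMatching m k (by omega)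
    set D := (m + 1) + (2 * (m + 1)).choose (k + 1) + 1
    refine ⟨N₁ + N₂ + 2 * (m + 1) * D, fun V _ X L hX hL hM hN => ?_⟩
    rcases card_le_or_exists_le_card_link (by omega) hL hM D with hsmall | ⟨x, hx⟩
    · have := Nat.le_mul_of_pos_left X.card (Nat.choose_pos (n := m + 1) (k := k + 1) (by omega))
      omega
    have hdel := h₁ V X _ ((filter_subset _ L).trans hX) (hL.mono (filter_subset _ _))
      (not_hasBergeMatching_filter_notMem hL hM hx) (by omega)
    have hlink := h₂ V X _
      ((link_subset_powerset_erase hX x).trans (powerset_mono.2 (erase_subset x X)))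
      (hL.link x) (not_hasBergeMatching_link hL hM hx) (by omega)
    rw [← card_filter_notMem_add_card_link (x := x), Nat.choose_succ_succ' m k,
      Nat.choose_succ_succ' m (k + 1), add_mul]
    omega

theorem berge_matching_free_max_degree_general
    (s r : ℕ) (hr : 3 ≤ r) (hrs : r ≤ s + 1) :
    ∃ n₀ : ℕ, ∀ n : ℕ, n₀ ≤ n →
      ∀ H : Finset (Finset (Fin n)), IsUniform r H →
        ¬ ContainsBerge (matchingHG (s + 1)) H →
        ∀ v : Fin n, (H.filter fun e => v ∈ e).card ≤
          Nat.choose (s - 1) (r - 2) * (n - 1) + Nat.choose (s - 1) (r - 1) := by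
  obtain ⟨k, rfl⟩ : ∃ k, r = k + 2 := ⟨r - 2, by omega⟩
  obtain ⟨m, rfl⟩ : ∃ m, s = m + 1 := ⟨s - 1, by omega⟩
  obtain ⟨N, hN⟩ := exists_card_le_choose_mul_add_choose_of_not_hasBergeMatching m k (by omega)
  refine ⟨N + (m + 1) + (2 * (m + 1)).choose (k + 1) + 1, fun n hn H hH hfree v => ?_⟩
  have hM : ¬ HasBergeMatching H (m + 1 + 1) := fun ⟨M⟩ => hfree M.containsBerge
  rw [show m + 1 - 1 = m by omega, show k + 2 - 2 = k by omega, show k + 2 - 1 = k + 1 by omega,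
    ← card_link]
  by_cases hsmall : (link H v).card ≤ (m + 1) + (2 * (m + 1)).choose (k + 1)
  · have := Nat.le_mul_of_pos_left (n - 1) (Nat.choose_pos (n := m) (k := k) (by omega))
    omega
  simpa using hN (Fin n) (univ.erase v) (link H v)
    (link_subset_powerset_erase (fun B _ => mem_powerset.2 (subset_univ B)) v) (hH.link v)
    (not_hasBergeMatching_link hH hM (by omega)) (by simp; omega)

/-- Claim: for `s ≥ 2` and `3 ≤ r ≤ s+1`, for all sufficiently large `n`, every
`n`-vertex `r`-graph with no Berge copy of `M_{s+1}` has maximum degree at most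
`C(s-1, r-2)(n-1) + C(s-1, r-1)`. -/
theorem berge_matching_free_max_degree
    (s r : ℕ) (hs : 2 ≤ s) (hr : 3 ≤ r) (hrs : r ≤ s + 1) :
    ∃ n₀ : ℕ, ∀ n : ℕ, n₀ ≤ n →
      ∀ H : Finset (Finset (Fin n)), IsUniform r H →
        ¬ ContainsBerge (matchingHG (s + 1)) H →
        ∀ v : Fin n, (H.filter fun e => v ∈ e).card ≤
          Nat.choose (s - 1) (r - 2) * (n - 1) + Nat.choose (s - 1) (r - 1) :=
  berge_matching_free_max_degree_general s r hr hrs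
end
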